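/- arXiv:2507.13125 — 9 statements merged into one kernel-verified Lean document; each statement's English description precedes it below -/
import Mathlib

section
/- Let t1 ∈ (0, t1*) and T = T(t1). Then the explicit function x* is of class C¹ on [0, T] and, with y* its derivative, the triple (x*, y*, u*) is admissible on [0, T]; it satisfies x*(0) = x*(T) = 1 and y*(0) = y*(T) = 0, and its cost ∫₀ᵀ u*(t) dt equals C(t1) = 2·t1·u_max + (T − 2·t1)·u_min. -/
/-!
Write `ω = √u_max`, `ν = √(-u_min)`. On the two `u_max`-arcs `x*` is a cosine, on the `u_min`-arc
it is the solution of `x'' = ν² x` leaving `t = t1` with the value and slope of `cos (ω t)`, so each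
piece solves `x'' = -u* x`. The derivatives agree at `t1` by construction; at `T - t1` they agree
because `T(t1)` is chosen so that `tanh (ν (T - 2 t1) / 2) = (ω / ν) tan (ω t1)`, which makes the
hyperbolic arc symmetric about `T / 2`. Admissibility is then the fundamental theorem of calculus,
applied to `y*` off the two switching times, and the cost is read off the lengths of the arcs.
-/

open MeasureTheory Real Set Filter Topology

noncomputable section

/-- An admissible triple `(x, y, u)` on `[0, T]`: `u` is Lebesgue measurable with
`umin ≤ u(t) ≤ umax` almost everywhere on `[0, T]`, and `x, y` solve the integral
equations `x(t) = x(0) + ∫₀ᵗ y` and `y(t) = y(0) − ∫₀ᵗ u·x` on `[0, T]`. -/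
def OCAdmissible (umin umax T : ℝ) (x y u : ℝ → ℝ) : Prop :=
  Measurable u ∧
  (∀ᵐ t ∂(volume.restrict (Icc (0:ℝ) T)), umin ≤ u t ∧ u t ≤ umax) ∧
  (∀ t ∈ Icc (0:ℝ) T, x t = x 0 + ∫ s in (0:ℝ)..t, y s) ∧
  (∀ t ∈ Icc (0:ℝ) T, y t = y 0 - ∫ s in (0:ℝ)..t, u s * x s)

/-- The cost of a control `u` on `[0, T]`. -/
def OCcost (T : ℝ) (u : ℝ → ℝ) : ℝ := ∫ t in (0:ℝ)..T, u t

/-- Periodicity of a trajectory on `[0, T]`. -/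
def OCPeriodic (T : ℝ) (x y : ℝ → ℝ) : Prop := x 0 = x T ∧ y 0 = y T

/-- Nontriviality of a trajectory. -/
def OCNontrivial (x y : ℝ → ℝ) : Prop := 0 < x 0 ^ 2 + y 0 ^ 2

/-- An optimal solution of the periodic optimal control problem on `[0, T]`. -/
def OCOptimal (umin umax T : ℝ) (x y u : ℝ → ℝ) : Prop :=
  OCAdmissible umin umax T x y u ∧ OCPeriodic T x y ∧ OCNontrivial x y ∧
  ∀ x' y' u' : ℝ → ℝ, OCAdmissible umin umax T x' y' u' → OCPeriodic T x' y' →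
    OCNontrivial x' y' → OCcost T u ≤ OCcost T u'

/-- `t1* = (1/ω_max)·Arctan(ω_min/ω_max)` with `ω_min = √(−u_min)`, `ω_max = √u_max`. -/
def OCt1star (umin umax : ℝ) : ℝ :=
  (1 / Real.sqrt umax) * Real.arctan (Real.sqrt (-umin) / Real.sqrt umax)

/-- The period `T(t1)`. -/
def OCT (umin umax t1 : ℝ) : ℝ :=
  (1 / Real.sqrt (-umin)) *
    Real.log ((1 + (Real.sqrt umax / Real.sqrt (-umin)) * Real.tan (Real.sqrt umax * t1)) /
              (1 - (Real.sqrt umax / Real.sqrt (-umin)) * Real.tan (Real.sqrt umax * t1)))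
  + 2 * t1

/-- The optimal cost `C(t1) = 2·t1·u_max + (T(t1) − 2·t1)·u_min`. -/
def OCC (umin umax t1 : ℝ) : ℝ := 2 * t1 * umax + (OCT umin umax t1 - 2 * t1) * umin

/-- The explicit bang-bang control `u*` on `[0, T]`. -/
def OCustar (umin umax t1 T : ℝ) (t : ℝ) : ℝ :=
  if t1 < t ∧ t < T - t1 then umin else umax

/-- The explicit trajectory `x*` on `[0, T]`. -/
def OCxstar (umin umax t1 T : ℝ) (t : ℝ) : ℝ :=
  if t ≤ t1 then Real.cos (Real.sqrt umax * t)
  else if t ≤ T - t1 then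
    Real.cos (Real.sqrt umax * t1) * Real.cosh (Real.sqrt (-umin) * (t - t1))
      - (Real.sqrt umax / Real.sqrt (-umin)) * Real.sin (Real.sqrt umax * t1) *
        Real.sinh (Real.sqrt (-umin) * (t - t1))
  else Real.cos (Real.sqrt umax * (T - t))

section PiecewiseDeriv

variable {E : Type*} [NormedAddCommGroup E] [NormedSpace ℝ E]

theorem hasDerivAt_ite_le_of_ne {f g : ℝ → E} {f' g' : E} {a t : ℝ}
    (hf : HasDerivAt f f' t) (hg : HasDerivAt g g' t) (ht : t ≠ a) :
    HasDerivAt (fun s => if s ≤ a then f s else g s) (if t ≤ a then f' else g') t := by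
  rcases ht.lt_or_gt with ht | ht
  · rw [if_pos ht.le]
    refine hf.congr_of_eventuallyEq ?_
    filter_upwards [Iio_mem_nhds ht] with s hs
    rw [if_pos (le_of_lt hs)]
  · rw [if_neg ht.not_ge]
    refine hg.congr_of_eventuallyEq ?_
    filter_upwards [Ioi_mem_nhds ht] with s hs
    rw [if_neg (not_le.2 hs)]

theorem hasDerivAt_ite_le {f g f' g' : ℝ → E} {a : ℝ}
    (hf : ∀ t, HasDerivAt f (f' t) t) (hg : ∀ t, HasDerivAt g (g' t) t)
    (h_eq : f a = g a) (h_deriv : f' a = g' a) (t : ℝ) :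
    HasDerivAt (fun s => if s ≤ a then f s else g s) (if t ≤ a then f' t else g' t) t := by
  rcases eq_or_ne t a with rfl | ht
  · have h_left : HasDerivWithinAt (fun s => if s ≤ t then f s else g s) (f' t) (Iic t) t :=
      (hf t).hasDerivWithinAt.congr (fun s hs => if_pos hs) (if_pos le_rfl)
    have h_right : HasDerivWithinAt (fun s => if s ≤ t then f s else g s) (f' t) (Ici t) t := by
      refine h_deriv ▸ (hg t).hasDerivWithinAt.congr (fun s hs => ?_) (by rw [if_pos le_rfl, h_eq])
      rcases (mem_Ici.1 hs).eq_or_lt with rfl | hs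
      · rw [if_pos le_rfl, h_eq]
      · rw [if_neg (not_le.2 hs)]
    rw [if_pos le_rfl]
    simpa only [Iic_union_Ici, hasDerivWithinAt_univ] using h_left.union h_right
  · exact hasDerivAt_ite_le_of_ne (hf t) (hg t) ht

end PiecewiseDeriv

theorem intervalIntegral_ite_Ioo {a b T p q : ℝ} (ha : 0 ≤ a) (hab : a ≤ b) (hb : b ≤ T) :
    ∫ t in (0:ℝ)..T, (if a < t ∧ t < b then p else q) = (b - a) * p + (T - (b - a)) * q := by
  have h_split : (fun t : ℝ => if a < t ∧ t < b then p else q) =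
      fun t => q + (Ioo a b).indicator (fun _ => p - q) t := by
    funext t
    by_cases ht : a < t ∧ t < b
    · rw [if_pos ht, indicator_of_mem (show t ∈ Ioo a b from ht)]; ring
    · rw [if_neg ht, indicator_of_notMem (show t ∉ Ioo a b from ht), add_zero]
  have h_int : IntervalIntegrable ((Ioo a b).indicator fun _ => p - q) volume 0 T :=
    ((integrableOn_const measure_Ioo_lt_top.ne).integrable_indicator
      measurableSet_Ioo).intervalIntegrable
  rw [h_split, intervalIntegral.integral_add intervalIntegrable_const h_int,
    intervalIntegral.integral_const, intervalIntegral.integral_of_le (ha.trans (hab.trans hb)),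
    setIntegral_indicator measurableSet_Ioo,
    inter_eq_right.2 (Ioo_subset_Ioc_self.trans (Ioc_subset_Ioc ha hb)), setIntegral_const,
    volume_real_Ioo_of_le hab, smul_eq_mul, smul_eq_mul]
  ring

theorem OCAdmissible_of_hasDerivAt {umin umax T : ℝ} {x y u : ℝ → ℝ} {s : Set ℝ}
    (hu : Measurable u) (hu_bound : ∀ᵐ t ∂(volume.restrict (Icc 0 T)), umin ≤ u t ∧ u t ≤ umax)
    (hx : ∀ t, HasDerivAt x (y t) t) (hy_cont : Continuous y) (hs : s.Countable)
    (hy : ∀ t ∉ s, HasDerivAt y (-(u t * x t)) t) :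
    OCAdmissible umin umax T x y u := by
  have hx_cont : Continuous x := continuous_iff_continuousAt.2 fun t => (hx t).continuousAt
  have hux : IntegrableOn (fun t => u t * x t) (Icc 0 T) := by
    refine (Measure.integrableOn_of_bounded (M := max |umin| |umax|) measure_Icc_lt_top.ne
      hu.aestronglyMeasurable ?_).mul_continuousOn hx_cont.continuousOn isCompact_Icc
    filter_upwards [hu_bound] with t ht
    exact abs_le_max_abs_abs ht.1 ht.2
  refine ⟨hu, hu_bound, fun t _ => ?_, fun t ht => ?_⟩
  · rw [intervalIntegral.integral_eq_sub_of_hasDerivAt (fun s _ => hx s)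
      (hy_cont.intervalIntegrable 0 t)]
    ring
  · have h_int : IntervalIntegrable (fun s => -(u s * x s)) volume 0 t :=
      ((intervalIntegrable_iff_integrableOn_Ioc_of_le ht.1).2
        (hux.mono_set (Ioc_subset_Icc_self.trans (Icc_subset_Icc_right ht.2)))).neg
    have h_ftc := integral_eq_of_hasDerivAt_off_countable y _ hs hy_cont.continuousOn
      (fun s hs' => hy s hs'.2) h_int
    rw [intervalIntegral.integral_neg] at h_ftc
    linarith

theorem cosh_log_div {k : ℝ} (hk : |k| < 1) :
    cosh (log ((1 + k) / (1 - k))) = (1 + k ^ 2) / (1 - k ^ 2) := by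
  obtain ⟨hk₁, hk₂⟩ := abs_lt.1 hk
  have h₁ : 1 - k ≠ 0 := by linarith
  have h₂ : 1 + k ≠ 0 := by linarith
  have h₃ : 1 - k ^ 2 ≠ 0 := by nlinarith
  rw [cosh_eq, exp_neg, exp_log (div_pos (by linarith) (by linarith))]
  field_simp
  ring

theorem sinh_log_div {k : ℝ} (hk : |k| < 1) :
    sinh (log ((1 + k) / (1 - k))) = 2 * k / (1 - k ^ 2) := by
  obtain ⟨hk₁, hk₂⟩ := abs_lt.1 hk
  have h₁ : 1 - k ≠ 0 := by linarith
  have h₂ : 1 + k ≠ 0 := by linarith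
  have h₃ : 1 - k ^ 2 ≠ 0 := by nlinarith
  rw [sinh_eq, exp_neg, exp_log (div_pos (by linarith) (by linarith))]
  field_simp
  ring

section Arcs

variable (ω ν t1 T : ℝ)

def hyperbolicArc (t : ℝ) : ℝ :=
  cos (ω * t1) * cosh (ν * (t - t1)) - ω / ν * sin (ω * t1) * sinh (ν * (t - t1))

def hyperbolicArcDeriv (t : ℝ) : ℝ :=
  ν * cos (ω * t1) * sinh (ν * (t - t1)) - ω * sin (ω * t1) * cosh (ν * (t - t1))

/-- `bangBangX (√u_max) (√(-u_min)) t1 T` unfolds to `OCxstar u_min u_max t1 T`. -/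
def bangBangX (t : ℝ) : ℝ :=
  if t ≤ t1 then cos (ω * t)
  else if t ≤ T - t1 then hyperbolicArc ω ν t1 t
  else cos (ω * (T - t))

def bangBangY (t : ℝ) : ℝ :=
  if t ≤ t1 then -(ω * sin (ω * t))
  else if t ≤ T - t1 then hyperbolicArcDeriv ω ν t1 t
  else ω * sin (ω * (T - t))

end Arcs

section BangBang

variable {ω ν t1 T : ℝ}

theorem hasDerivAt_cos_mul (t : ℝ) :
    HasDerivAt (fun s => cos (ω * s)) (-(ω * sin (ω * t))) t :=
  ((hasDerivAt_id' t).const_mul ω).cos.congr_deriv (by ring)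

theorem hasDerivAt_neg_mul_sin_mul (t : ℝ) :
    HasDerivAt (fun s => -(ω * sin (ω * s))) (-(ω ^ 2 * cos (ω * t))) t :=
  (((hasDerivAt_id' t).const_mul ω).sin.const_mul ω).neg.congr_deriv (by ring)

theorem hasDerivAt_cos_mul_sub (t : ℝ) :
    HasDerivAt (fun s => cos (ω * (T - s))) (ω * sin (ω * (T - t))) t :=
  (((hasDerivAt_id' t).const_sub T).const_mul ω).cos.congr_deriv (by ring)

theorem hasDerivAt_mul_sin_mul_sub (t : ℝ) :
    HasDerivAt (fun s => ω * sin (ω * (T - s))) (-(ω ^ 2 * cos (ω * (T - t)))) t :=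
  ((((hasDerivAt_id' t).const_sub T).const_mul ω).sin.const_mul ω).congr_deriv (by ring)

theorem hasDerivAt_hyperbolicArc (hν : ν ≠ 0) (t : ℝ) :
    HasDerivAt (hyperbolicArc ω ν t1) (hyperbolicArcDeriv ω ν t1 t) t := by
  have h_lin : HasDerivAt (fun s : ℝ => ν * (s - t1)) ν t :=
    (((hasDerivAt_id' t).sub_const t1).const_mul ν).congr_deriv (mul_one ν)
  exact ((h_lin.cosh.const_mul (cos (ω * t1))).sub
    (h_lin.sinh.const_mul (ω / ν * sin (ω * t1)))).congr_deriv
    (by rw [hyperbolicArcDeriv]; field_simp)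

theorem hasDerivAt_hyperbolicArcDeriv (hν : ν ≠ 0) (t : ℝ) :
    HasDerivAt (hyperbolicArcDeriv ω ν t1) (ν ^ 2 * hyperbolicArc ω ν t1 t) t := by
  have h_lin : HasDerivAt (fun s : ℝ => ν * (s - t1)) ν t :=
    (((hasDerivAt_id' t).sub_const t1).const_mul ν).congr_deriv (mul_one ν)
  exact ((h_lin.sinh.const_mul (ν * cos (ω * t1))).sub
    (h_lin.cosh.const_mul (ω * sin (ω * t1)))).congr_deriv
    (by rw [hyperbolicArc]; field_simp)

theorem hasDerivAt_bangBangX (hν : ν ≠ 0) (hmid : t1 ≤ T - t1)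
    (hx_match : hyperbolicArc ω ν t1 (T - t1) = cos (ω * t1))
    (hy_match : hyperbolicArcDeriv ω ν t1 (T - t1) = ω * sin (ω * t1)) (t : ℝ) :
    HasDerivAt (bangBangX ω ν t1 T) (bangBangY ω ν t1 T t) t := by
  have h_tail := hasDerivAt_ite_le (a := T - t1) (hasDerivAt_hyperbolicArc hν)
    hasDerivAt_cos_mul_sub (by rw [hx_match, sub_sub_cancel]) (by rw [hy_match, sub_sub_cancel])
  exact hasDerivAt_ite_le hasDerivAt_cos_mul h_tail
    (by simp [hmid, hyperbolicArc]) (by simp [hmid, hyperbolicArcDeriv]) t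

theorem continuous_bangBangY (hmid : t1 ≤ T - t1)
    (hy_match : hyperbolicArcDeriv ω ν t1 (T - t1) = ω * sin (ω * t1)) :
    Continuous (bangBangY ω ν t1 T) := by
  have h_tail : Continuous fun t =>
      if t ≤ T - t1 then hyperbolicArcDeriv ω ν t1 t else ω * sin (ω * (T - t)) :=
    Continuous.if_le (by unfold hyperbolicArcDeriv; fun_prop) (by fun_prop) continuous_id
      continuous_const (fun t ht => by rw [ht, hy_match, sub_sub_cancel])
  exact Continuous.if_le (by fun_prop) h_tail continuous_id continuous_const
    (fun t ht => by simp [ht, hmid, hyperbolicArcDeriv])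

theorem hasDerivAt_bangBangY (hν : ν ≠ 0) {t : ℝ} (ht : t ∉ ({t1, T - t1} : Set ℝ)) :
    HasDerivAt (bangBangY ω ν t1 T)
      (-(OCustar (-ν ^ 2) (ω ^ 2) t1 T t * bangBangX ω ν t1 T t)) t := by
  simp only [mem_insert_iff, mem_singleton_iff, not_or] at ht
  have h_tail := hasDerivAt_ite_le_of_ne (hasDerivAt_hyperbolicArcDeriv (ω := ω) (t1 := t1) hν t)
    (hasDerivAt_mul_sin_mul_sub (ω := ω) (T := T) t) ht.2
  refine (hasDerivAt_ite_le_of_ne (hasDerivAt_neg_mul_sin_mul t) h_tail ht.1).congr_deriv ?_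
  simp only [OCustar, bangBangX]
  split_ifs <;> first | ring1 | grind

theorem switching_conditions (hω : 0 < ω) (hν : 0 < ν) (ht1 : 0 < t1)
    (ht1_lt : t1 < 1 / ω * arctan (ν / ω))
    (hT : T = 1 / ν * log ((1 + ω / ν * tan (ω * t1)) / (1 - ω / ν * tan (ω * t1))) + 2 * t1) :
    t1 ≤ T - t1 ∧ hyperbolicArc ω ν t1 (T - t1) = cos (ω * t1) ∧
      hyperbolicArcDeriv ω ν t1 (T - t1) = ω * sin (ω * t1) := by
  set k := ω / ν * tan (ω * t1) with hk_def
  have hωt1 : ω * t1 < arctan (ν / ω) := by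
    rwa [one_div_mul_eq_div, lt_div_iff₀' hω] at ht1_lt
  have hωt1_pos : 0 < ω * t1 := mul_pos hω ht1
  have hπ : ω * t1 < π / 2 := hωt1.trans (arctan_lt_pi_div_two _)
  have hcos : 0 < cos (ω * t1) := cos_pos_of_mem_Ioo ⟨by linarith [pi_pos], hπ⟩
  have hk_pos : 0 < k := mul_pos (div_pos hω hν) (tan_pos_of_pos_of_lt_pi_div_two hωt1_pos hπ)
  have hk_lt : k < 1 := by
    have h := tan_lt_tan_of_lt_of_lt_pi_div_two (by linarith [pi_pos]) (arctan_lt_pi_div_two _) hωt1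
    rw [tan_arctan, lt_div_iff₀ hω] at h
    rw [hk_def, div_mul_eq_mul_div, div_lt_one hν]
    linarith
  have hk_abs : |k| < 1 := abs_lt.2 ⟨by linarith, hk_lt⟩
  have hL : ν * (T - t1 - t1) = log ((1 + k) / (1 - k)) := by
    rw [hT]; field_simp; ring
  have hsin : ω * sin (ω * t1) = ν * k * cos (ω * t1) := by
    rw [hk_def, tan_eq_sin_div_cos]; field_simp
  have h₁ : 1 - k ^ 2 ≠ 0 := by nlinarith
  clear_value k
  refine ⟨?_, ?_, ?_⟩
  · have hL_nonneg : 0 ≤ ν * (T - t1 - t1) :=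
      hL ▸ log_nonneg ((le_div_iff₀ (by linarith)).2 (by linarith))
    nlinarith
  · rw [hyperbolicArc, hL, cosh_log_div hk_abs, sinh_log_div hk_abs]
    field_simp
    linear_combination (-2 * k) * hsin
  · rw [hyperbolicArcDeriv, hL, cosh_log_div hk_abs, sinh_log_div hk_abs]
    field_simp
    linear_combination -2 * hsin

end BangBang

theorem measurable_OCustar (umin umax t1 T : ℝ) : Measurable (OCustar umin umax t1 T) :=
  Measurable.ite measurableSet_Ioo measurable_const measurable_const

theorem OCustar_mem_Icc {umin umax : ℝ} (h : umin ≤ umax) (t1 T t : ℝ) :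
    umin ≤ OCustar umin umax t1 T t ∧ OCustar umin umax t1 T t ≤ umax := by
  unfold OCustar
  split_ifs <;> constructor <;> linarith

/-- The explicit function `x*` is `C¹` on `[0, T]`, the triple `(x*, (x*)', u*)` is
admissible on `[0, T]`, it satisfies `x*(0) = x*(T) = 1`, `(x*)'(0) = (x*)'(T) = 0`,
and its cost equals `C(t1) = 2·t1·u_max + (T − 2·t1)·u_min`. -/
theorem explicit_triple_admissible (umin umax : ℝ)
    (humin : umin < 0) (humax : 0 < umax)
    (t1 : ℝ) (ht1 : t1 ∈ Ioo 0 (OCt1star umin umax)) (T : ℝ) (hT : T = OCT umin umax t1) :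
    ContDiffOn ℝ 1 (OCxstar umin umax t1 T) (Icc (0:ℝ) T) ∧
    OCAdmissible umin umax T (OCxstar umin umax t1 T) (deriv (OCxstar umin umax t1 T))
      (OCustar umin umax t1 T) ∧
    OCxstar umin umax t1 T 0 = 1 ∧ OCxstar umin umax t1 T T = 1 ∧
    deriv (OCxstar umin umax t1 T) 0 = 0 ∧ deriv (OCxstar umin umax t1 T) T = 0 ∧
    OCcost T (OCustar umin umax t1 T) = OCC umin umax t1 := by
  obtain ⟨ht1_pos, ht1_lt⟩ := ht1
  have hω : 0 < √umax := sqrt_pos.2 humax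
  have hν : 0 < √(-umin) := sqrt_pos.2 (neg_pos.2 humin)
  obtain ⟨hmid, hx_match, hy_match⟩ := switching_conditions hω hν ht1_pos ht1_lt hT
  have hx : ∀ t, HasDerivAt (OCxstar umin umax t1 T) (bangBangY √umax √(-umin) t1 T t) t :=
    hasDerivAt_bangBangX hν.ne' hmid hx_match hy_match
  have hy_cont := continuous_bangBangY hmid hy_match
  have hderiv : deriv (OCxstar umin umax t1 T) = bangBangY √umax √(-umin) t1 T :=
    funext fun t => (hx t).deriv
  have hu : OCustar umin umax t1 T = OCustar (-√(-umin) ^ 2) (√umax ^ 2) t1 T := by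
    rw [sq_sqrt humax.le, sq_sqrt (neg_pos.2 humin).le, neg_neg]
  have ht1_lt_T : t1 < T := by linarith
  refine ⟨(contDiff_one_iff_deriv.2
    ⟨fun t => (hx t).differentiableAt, hderiv ▸ hy_cont⟩).contDiffOn, ?_, ?_, ?_, ?_, ?_, ?_⟩
  · rw [hderiv]
    refine OCAdmissible_of_hasDerivAt (measurable_OCustar _ _ _ _)
      (ae_of_all _ (OCustar_mem_Icc (humin.trans humax).le t1 T)) hx hy_cont
      ((countable_singleton _).insert _) fun t ht => hu ▸ hasDerivAt_bangBangY hν.ne' ht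
  · simp [OCxstar, ht1_pos.le]
  · simp [OCxstar, ht1_lt_T.not_ge, ht1_pos]
  · simp [hderiv, bangBangY, ht1_pos.le]
  · simp [hderiv, bangBangY, ht1_lt_T.not_ge, ht1_pos]
  · unfold OCcost OCustar
    rw [intervalIntegral_ite_Ioo ht1_pos.le hmid (by linarith), OCC, ← hT]
    ring
end
end

section
/- The function t1 ↦ T(t1) is differentiable on (0, t1*) with derivative T′(t1) = 2·(1 + ω_max²/ω_min²)/(1 − (ω_max²/ω_min²)·tan²(ω_max·t1)) > 0, hence strictly increasing on (0, t1*); moreover T(t1) → 0 as t1 → 0⁺ and T(t1) → +∞ as t1 → t1*⁻, so that t1 ↦ T(t1) is a bijection from (0, t1*) onto (0, +∞). -/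
/-!
Write `k(t) = (ω_max/ω_min)·tan(ω_max·t)`, so that `T = (1/ω_min)·log((1 + k)/(1 - k)) + 2t`.
On `[0, t1*)` the angle `ω_max·t` stays in `[0, arctan(ω_min/ω_max))`, hence `0 ≤ k < 1`, and
`k → 1` as `t → t1*`. The chain rule with `1/cos² = 1 + tan²` gives the stated `T'`, positive
because `k² < 1`. Since `T(0) = 0` and `log((1 + k)/(1 - k)) → ∞` as `k → 1⁻`, continuity,
strict monotonicity and the intermediate value theorem make `T` a bijection onto `(0, ∞)`.
-/

open MeasureTheory Real Set Filter Topology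

noncomputable section

theorem HasDerivAt.log_one_add_div_one_sub {g : ℝ → ℝ} {g' x : ℝ} (hg : HasDerivAt g g' x)
    (hx : g x ∈ Ioo (-1) 1) :
    HasDerivAt (fun t => Real.log ((1 + g t) / (1 - g t))) (2 * g' / (1 - g x ^ 2)) x := by
  have hplus : 0 < 1 + g x := by linarith [hx.1]
  have hminus : 0 < 1 - g x := by linarith [hx.2]
  refine (((hg.const_add 1).div (hg.const_sub 1) hminus.ne').log
    (div_pos hplus hminus).ne').congr_deriv ?_
  have hsq : 1 - g x ^ 2 = (1 + g x) * (1 - g x) := by ring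
  simp only [Pi.div_apply, hsq]
  field_simp
  ring

theorem tendsto_log_one_add_div_one_sub_nhdsLT_one :
    Tendsto (fun x : ℝ => log ((1 + x) / (1 - x))) (𝓝[<] 1) atTop := by
  have hnum : Tendsto (fun x : ℝ => 1 + x) (𝓝[<] 1) (𝓝 2) :=
    ((continuous_const_add 1).tendsto' 1 2 (by norm_num)).mono_left nhdsWithin_le_nhds
  have hden : Tendsto (fun x : ℝ => 1 - x) (𝓝[<] 1) (𝓝[>] 0) := by
    refine tendsto_nhdsWithin_of_tendsto_nhds_of_eventually_within _ ?_ ?_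
    · exact ((continuous_sub_left 1).tendsto' 1 0 (sub_self 1)).mono_left nhdsWithin_le_nhds
    · filter_upwards [self_mem_nhdsWithin] with x hx using sub_pos.2 (mem_Iio.1 hx)
  exact tendsto_log_atTop.comp
    (hnum.pos_mul_atTop two_pos (tendsto_inv_nhdsGT_zero.comp hden))

theorem tan_mem_Ico_of_mem_Ico_arctan {x c : ℝ} (hx : x ∈ Ico 0 (arctan c)) :
    tan x ∈ Ico 0 c := by
  have hx_lt : x < π / 2 := hx.2.trans (arctan_lt_pi_div_two c)
  refine ⟨tan_nonneg_of_nonneg_of_le_pi_div_two hx.1 hx_lt.le, ?_⟩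
  rw [← arctan_strictMono.lt_iff_lt, arctan_tan (by linarith [hx.1, pi_pos]) hx_lt]
  exact hx.2

theorem StrictMonoOn.bijOn_Ioo_Ioi {f : ℝ → ℝ} {a b : ℝ} (hab : a < b)
    (hmono : StrictMonoOn f (Ico a b)) (hcont : ContinuousOn f (Ico a b))
    (htop : Tendsto f (𝓝[<] b) atTop) : BijOn f (Ioo a b) (Ioi (f a)) := by
  refine ⟨fun x hx => hmono (left_mem_Ico.2 hab) (Ioo_subset_Ico_self hx) hx.1,
    hmono.injOn.mono Ioo_subset_Ico_self, fun y hy => ?_⟩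
  obtain ⟨c, hyc, hc⟩ :=
    ((htop.eventually_gt_atTop y).and (Ioo_mem_nhdsLT hab)).exists
  have hsub : Icc a c ⊆ Ico a b := Icc_subset_Ico_right hc.2
  obtain ⟨x, hx, rfl⟩ := intermediate_value_Ioo hc.1.le (hcont.mono hsub) ⟨hy, hyc⟩
  exact ⟨x, ⟨hx.1, hx.2.trans hc.2⟩, rfl⟩

section

variable {umin umax : ℝ}

theorem OCt1star_pos (humin : umin < 0) (humax : 0 < umax) : 0 < OCt1star umin umax :=
  mul_pos (by positivity) (arctan_pos.2 (div_pos (sqrt_pos.2 (neg_pos.2 humin)) (sqrt_pos.2 humax)))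

theorem sqrt_mul_mem_Ico_arctan (humax : 0 < umax) {t : ℝ}
    (ht : t ∈ Ico 0 (OCt1star umin umax)) :
    √umax * t ∈ Ico 0 (arctan (√(-umin) / √umax)) := by
  have hb : 0 < √umax := sqrt_pos.2 humax
  refine ⟨mul_nonneg hb.le ht.1, ?_⟩
  calc √umax * t < √umax * OCt1star umin umax := mul_lt_mul_of_pos_left ht.2 hb
    _ = arctan (√(-umin) / √umax) := by unfold OCt1star; field_simp

theorem OC_ratio_mem_Ico (humin : umin < 0) (humax : 0 < umax) {t : ℝ}
    (ht : t ∈ Ico 0 (OCt1star umin umax)) :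
    √umax / √(-umin) * tan (√umax * t) ∈ Ico 0 1 := by
  have ha : 0 < √(-umin) := sqrt_pos.2 (neg_pos.2 humin)
  have hb : 0 < √umax := sqrt_pos.2 humax
  have htan := tan_mem_Ico_of_mem_Ico_arctan (sqrt_mul_mem_Ico_arctan humax ht)
  refine ⟨mul_nonneg (by positivity) htan.1, ?_⟩
  calc √umax / √(-umin) * tan (√umax * t) < √umax / √(-umin) * (√(-umin) / √umax) :=
        mul_lt_mul_of_pos_left htan.2 (by positivity)
    _ = 1 := by field_simp

theorem OCT_deriv_denom_pos (humin : umin < 0) (humax : 0 < umax) {t : ℝ}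
    (ht : t ∈ Ico 0 (OCt1star umin umax)) :
    0 < 1 - (√umax ^ 2 / √(-umin) ^ 2) * tan (√umax * t) ^ 2 := by
  have hratio := OC_ratio_mem_Ico humin humax ht
  rw [← div_pow, ← mul_pow]
  nlinarith [hratio.1, hratio.2]

theorem OCT_hasDerivAt (humin : umin < 0) (humax : 0 < umax) {t : ℝ}
    (ht : t ∈ Ico 0 (OCt1star umin umax)) :
    HasDerivAt (OCT umin umax)
      (2 * (1 + √umax ^ 2 / √(-umin) ^ 2) /
        (1 - (√umax ^ 2 / √(-umin) ^ 2) * tan (√umax * t) ^ 2)) t := by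
  have ha : 0 < √(-umin) := sqrt_pos.2 (neg_pos.2 humin)
  have hbt := sqrt_mul_mem_Ico_arctan humax ht
  have hcos : cos (√umax * t) ≠ 0 :=
    (cos_pos_of_mem_Ioo ⟨by linarith [hbt.1, pi_pos], hbt.2.trans (arctan_lt_pi_div_two _)⟩).ne'
  have hratio := OC_ratio_mem_Ico humin humax ht
  have htan : HasDerivAt (fun t => tan (√umax * t))
      (1 / cos (√umax * t) ^ 2 * (√umax * 1)) t :=
    (hasDerivAt_tan hcos).comp t ((hasDerivAt_id t).const_mul √umax)
  have hlog := (htan.const_mul (√umax / √(-umin))).log_one_add_div_one_sub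
    ⟨by linarith [hratio.1], hratio.2⟩
  refine ((hlog.const_mul (1 / √(-umin))).add ((hasDerivAt_id t).const_mul 2)).congr_deriv ?_
  have hden : √(-umin) ^ 2 - √umax ^ 2 * tan (√umax * t) ^ 2 ≠ 0 := by
    have := OCT_deriv_denom_pos humin humax ht
    rw [sub_pos, div_mul_eq_mul_div, div_lt_one (by positivity)] at this
    exact (sub_pos.2 this).ne'
  rw [one_div (cos _ ^ 2), ← inv_one_add_tan_sq hcos, inv_inv]
  field_simp
  ring

theorem OCT_zero : OCT umin umax 0 = 0 := by simp [OCT]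

theorem tendsto_OCT_nhdsLT_OCt1star (humin : umin < 0) (humax : 0 < umax) :
    Tendsto (OCT umin umax) (𝓝[<] OCt1star umin umax) atTop := by
  set s := OCt1star umin umax
  have ha : 0 < √(-umin) := sqrt_pos.2 (neg_pos.2 humin)
  have hb : 0 < √umax := sqrt_pos.2 humax
  have hbs : √umax * s = arctan (√(-umin) / √umax) := by simp only [s, OCt1star]; field_simp
  have hratio_cont : ContinuousAt (fun t => √umax / √(-umin) * tan (√umax * t)) s := by
    have hcos : cos (√umax * s) ≠ 0 := by rw [hbs]; exact (cos_arctan_pos _).ne'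
    exact ((continuousAt_tan.2 hcos).comp (continuous_const_mul _).continuousAt).const_mul _
  have hratio_one : √umax / √(-umin) * tan (√umax * s) = 1 := by
    rw [hbs, tan_arctan]; field_simp
  have hratio :
      Tendsto (fun t => √umax / √(-umin) * tan (√umax * t)) (𝓝[<] s) (𝓝[<] 1) := by
    refine tendsto_nhdsWithin_of_tendsto_nhds_of_eventually_within _ ?_ ?_
    · simpa only [hratio_one] using hratio_cont.continuousWithinAt.tendsto
    · filter_upwards [Ioo_mem_nhdsLT (OCt1star_pos humin humax)] with t ht
      exact (OC_ratio_mem_Ico humin humax (Ioo_subset_Ico_self ht)).2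
  exact ((tendsto_log_one_add_div_one_sub_nhdsLT_one.comp hratio).const_mul_atTop
    (by positivity)).atTop_add ((continuous_const_mul 2).tendsto s |>.mono_left nhdsWithin_le_nhds)

end

/-- The function `t1 ↦ T(t1)` is differentiable on `(0, t1*)` with the explicit positive
derivative, hence strictly increasing; it tends to `0` at `0⁺` and to `+∞` at `t1*⁻`,
and is a bijection from `(0, t1*)` onto `(0, +∞)`. -/
theorem T_strictMono_bijective (umin umax : ℝ) (humin : umin < 0) (humax : 0 < umax) :
    (∀ t1 ∈ Ioo 0 (OCt1star umin umax),
      HasDerivAt (OCT umin umax)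
        (2 * (1 + Real.sqrt umax ^ 2 / Real.sqrt (-umin) ^ 2) /
          (1 - (Real.sqrt umax ^ 2 / Real.sqrt (-umin) ^ 2) *
            Real.tan (Real.sqrt umax * t1) ^ 2)) t1 ∧
      0 < 2 * (1 + Real.sqrt umax ^ 2 / Real.sqrt (-umin) ^ 2) /
          (1 - (Real.sqrt umax ^ 2 / Real.sqrt (-umin) ^ 2) *
            Real.tan (Real.sqrt umax * t1) ^ 2)) ∧
    StrictMonoOn (OCT umin umax) (Ioo 0 (OCt1star umin umax)) ∧
    Tendsto (OCT umin umax) (nhdsWithin 0 (Ioi 0)) (nhds 0) ∧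
    Tendsto (OCT umin umax) (nhdsWithin (OCt1star umin umax) (Iio (OCt1star umin umax)))
      atTop ∧
    BijOn (OCT umin umax) (Ioo 0 (OCt1star umin umax)) (Ioi 0) := by
  have hs := OCt1star_pos humin humax
  have hderiv_pos : ∀ t ∈ Ico 0 (OCt1star umin umax),
      0 < 2 * (1 + √umax ^ 2 / √(-umin) ^ 2) /
        (1 - (√umax ^ 2 / √(-umin) ^ 2) * tan (√umax * t) ^ 2) :=
    fun t ht => div_pos (by positivity) (OCT_deriv_denom_pos humin humax ht)
  have hcont : ContinuousOn (OCT umin umax) (Ico 0 (OCt1star umin umax)) :=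
    fun t ht => (OCT_hasDerivAt humin humax ht).continuousAt.continuousWithinAt
  have hmono : StrictMonoOn (OCT umin umax) (Ico 0 (OCt1star umin umax)) :=
    strictMonoOn_of_hasDerivWithinAt_pos (convex_Ico 0 _) hcont
      (fun t ht => (OCT_hasDerivAt humin humax (interior_subset ht)).hasDerivWithinAt)
      (fun t ht => hderiv_pos t (interior_subset ht))
  have hlim_zero : Tendsto (OCT umin umax) (𝓝[>] 0) (𝓝 0) := by
    simpa only [ContinuousWithinAt, OCT_zero] using
      (OCT_hasDerivAt humin humax (left_mem_Ico.2 hs)).continuousAt.continuousWithinAt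
  have hlim_top := tendsto_OCT_nhdsLT_OCt1star humin humax
  refine ⟨fun t ht => ⟨OCT_hasDerivAt humin humax (Ioo_subset_Ico_self ht),
    hderiv_pos t (Ioo_subset_Ico_self ht)⟩, hmono.mono Ioo_subset_Ico_self, hlim_zero,
    hlim_top, ?_⟩
  simpa only [OCT_zero] using hmono.bijOn_Ioo_Ioi hs hcont hlim_top

end
end

section
/- For all real numbers s1 < s2 and every β > 0, there exists a triple (x, y, u) of functions on [s1, s2] with u Lebesgue measurable and u_min ≤ u(t) ≤ u_max for almost every t ∈ [s1, s2], x(t) = x(s1) + ∫_{s1}^{t} y(s) ds and y(t) = y(s1) − ∫_{s1}^{t} u(s)·x(s) ds for all t ∈ [s1, s2], such that x(s1) = x(s2) = β, y(s1) = y(s2) = 0, x(t) ≤ β for every t ∈ [s1, s2], and ∫_{s1}^{s2} u(t) dt < 0. -/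
/-!
Take for `x` one period of a shallow cosine dip below `β`, `x = β (1 - ε (1 - cos ω (t - s1)))`
with `ω (s2 - s1) = 2π`, and the control `u = -x'' / x`. The Riccati substitution `w = x' / x`
gives `w' = -u - w²`; since `w` vanishes at both ends, `∫ u = -∫ w² < 0`. Taking `ε` small keeps
`|u| ≤ ε ω² / (1 - 2ε)` below `min (-umin) umax`.
-/

open MeasureTheory Real Set Filter Topology

noncomputable section

section Riccati

variable {f f' f'' : ℝ → ℝ} {a b : ℝ}

theorem integral_deriv2_div_eq (hf : ∀ t ∈ uIcc a b, HasDerivAt f (f' t) t)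
    (hf' : ∀ t ∈ uIcc a b, HasDerivAt f' (f'' t) t) (hf'' : ContinuousOn f'' (uIcc a b))
    (hf0 : ∀ t ∈ uIcc a b, f t ≠ 0) :
    ∫ t in a..b, f'' t / f t = (∫ t in a..b, (f' t / f t) ^ 2) + (f' b / f b - f' a / f a) := by
  have hI₁ : ContinuousOn (fun t => f'' t / f t) (uIcc a b) :=
    hf''.div (HasDerivAt.continuousOn hf) hf0
  have hI₂ : ContinuousOn (fun t => (f' t / f t) ^ 2) (uIcc a b) :=
    ((HasDerivAt.continuousOn hf').div (HasDerivAt.continuousOn hf) hf0).pow 2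
  have hw : ∀ t ∈ uIcc a b,
      HasDerivAt (fun t => f' t / f t) (f'' t / f t - (f' t / f t) ^ 2) t := fun t ht =>
    ((hf' t ht).div (hf t ht) (hf0 t ht)).congr_deriv (by field_simp [hf0 t ht])
  have hftc := intervalIntegral.integral_eq_sub_of_hasDerivAt hw (hI₁.sub hI₂).intervalIntegrable
  rw [intervalIntegral.integral_sub hI₁.intervalIntegrable hI₂.intervalIntegrable] at hftc
  linarith

theorem integral_deriv2_div_pos (hab : a < b) (hf : ∀ t ∈ Icc a b, HasDerivAt f (f' t) t)
    (hf' : ∀ t ∈ Icc a b, HasDerivAt f' (f'' t) t) (hf'' : ContinuousOn f'' (Icc a b))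
    (hf0 : ∀ t ∈ Icc a b, f t ≠ 0) (ha : f' a = 0) (hb : f' b = 0)
    (hc : ∃ c ∈ Icc a b, f' c ≠ 0) :
    0 < ∫ t in a..b, f'' t / f t := by
  obtain ⟨c, hcab, hc⟩ := hc
  have hsq : 0 < ∫ t in a..b, (f' t / f t) ^ 2 :=
    intervalIntegral.integral_pos hab
      (((HasDerivAt.continuousOn hf').div (HasDerivAt.continuousOn hf) hf0).pow 2)
      (fun t _ => sq_nonneg _) ⟨c, hcab, sq_pos_of_ne_zero (div_ne_zero hc (hf0 c hcab))⟩
  rw [← uIcc_of_le hab.le] at hf hf' hf'' hf0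
  rwa [integral_deriv2_div_eq hf hf' hf'' hf0, ha, hb, zero_div, zero_div, sub_zero, add_zero]

end Riccati

section CosDip

variable (ε ω s : ℝ)

def cosDip (t : ℝ) : ℝ := 1 - ε * (1 - cos (ω * (t - s)))

def cosDipDeriv (t : ℝ) : ℝ := -(ε * ω) * sin (ω * (t - s))

def cosDipDeriv2 (t : ℝ) : ℝ := -(ε * ω ^ 2) * cos (ω * (t - s))

def cosDipControl (t : ℝ) : ℝ := -(cosDipDeriv2 ε ω s t / cosDip ε ω s t)

theorem hasDerivAt_mul_sub (t : ℝ) : HasDerivAt (fun t => ω * (t - s)) ω t := by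
  simpa using ((hasDerivAt_id t).sub_const s).const_mul ω

theorem hasDerivAt_cosDip (t : ℝ) : HasDerivAt (cosDip ε ω s) (cosDipDeriv ε ω s t) t :=
  (((hasDerivAt_mul_sub ω s t).cos.const_sub 1).const_mul ε |>.const_sub 1).congr_deriv
    (by rw [cosDipDeriv]; ring)

theorem hasDerivAt_cosDipDeriv (t : ℝ) :
    HasDerivAt (cosDipDeriv ε ω s) (cosDipDeriv2 ε ω s t) t :=
  ((hasDerivAt_mul_sub ω s t).sin.const_mul (-(ε * ω))).congr_deriv (by rw [cosDipDeriv2]; ring)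

theorem continuous_cosDip : Continuous (cosDip ε ω s) :=
  continuous_iff_continuousAt.2 fun t => (hasDerivAt_cosDip ε ω s t).continuousAt

theorem continuous_cosDipDeriv : Continuous (cosDipDeriv ε ω s) :=
  continuous_iff_continuousAt.2 fun t => (hasDerivAt_cosDipDeriv ε ω s t).continuousAt

theorem continuous_cosDipDeriv2 : Continuous (cosDipDeriv2 ε ω s) := by
  unfold cosDipDeriv2
  fun_prop

theorem integral_cosDipDeriv (a b : ℝ) :
    ∫ t in a..b, cosDipDeriv ε ω s t = cosDip ε ω s b - cosDip ε ω s a :=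
  intervalIntegral.integral_eq_sub_of_hasDerivAt (fun t _ => hasDerivAt_cosDip ε ω s t)
    ((continuous_cosDipDeriv ε ω s).intervalIntegrable a b)

theorem integral_cosDipDeriv2 (a b : ℝ) :
    ∫ t in a..b, cosDipDeriv2 ε ω s t = cosDipDeriv ε ω s b - cosDipDeriv ε ω s a :=
  intervalIntegral.integral_eq_sub_of_hasDerivAt (fun t _ => hasDerivAt_cosDipDeriv ε ω s t)
    ((continuous_cosDipDeriv2 ε ω s).intervalIntegrable a b)

variable {ε ω s}

theorem cosDip_le_one (hε : 0 ≤ ε) (t : ℝ) : cosDip ε ω s t ≤ 1 := by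
  have := cos_le_one (ω * (t - s))
  rw [cosDip]
  nlinarith

theorem one_sub_two_mul_le_cosDip (hε : 0 ≤ ε) (t : ℝ) : 1 - 2 * ε ≤ cosDip ε ω s t := by
  have := neg_one_le_cos (ω * (t - s))
  rw [cosDip]
  nlinarith

theorem cosDip_pos (hε : 0 ≤ ε) (hε₁ : 2 * ε < 1) (t : ℝ) : 0 < cosDip ε ω s t :=
  (sub_pos.2 hε₁).trans_le (one_sub_two_mul_le_cosDip hε t)

theorem cosDip_eq_one {t : ℝ} (h : cos (ω * (t - s)) = 1) : cosDip ε ω s t = 1 := by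
  simp [cosDip, h]

theorem cosDipDeriv_eq_zero {t : ℝ} (h : cos (ω * (t - s)) = 1) : cosDipDeriv ε ω s t = 0 := by
  simp [cosDipDeriv, sin_eq_zero_iff_cos_eq.2 (Or.inl h)]

theorem continuous_cosDipControl (hε : 0 ≤ ε) (hε₁ : 2 * ε < 1) :
    Continuous (cosDipControl ε ω s) :=
  ((continuous_cosDipDeriv2 ε ω s).div (continuous_cosDip ε ω s)
    fun t => (cosDip_pos hε hε₁ t).ne').neg

theorem abs_cosDipControl_le (hε : 0 ≤ ε) (hε₁ : 2 * ε < 1) (t : ℝ) :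
    |cosDipControl ε ω s t| ≤ ε * ω ^ 2 / (1 - 2 * ε) := by
  rw [cosDipControl, abs_neg, abs_div, abs_of_pos (cosDip_pos hε hε₁ t), cosDipDeriv2, abs_mul,
    abs_neg, abs_of_nonneg (by positivity)]
  exact div_le_div₀ (by positivity) (mul_le_of_le_one_right (by positivity) (abs_cos_le_one _))
    (sub_pos.2 hε₁) (one_sub_two_mul_le_cosDip hε t)

theorem exists_abs_cosDipControl_le {M : ℝ} (hM : 0 < M) (ω s : ℝ) :
    ∃ ε, 0 < ε ∧ 2 * ε < 1 ∧ ∀ t, |cosDipControl ε ω s t| ≤ M := by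
  set ε := M / (ω ^ 2 + 4 * M)
  have hε : 0 < ε := by positivity
  have hεM : ε * (ω ^ 2 + 4 * M) = M := div_mul_cancel₀ _ (by positivity)
  have hε₁ : 2 * ε < 1 := by nlinarith [sq_nonneg ω]
  refine ⟨ε, hε, hε₁, fun t => (abs_cosDipControl_le hε.le hε₁ t).trans ?_⟩
  rw [div_le_iff₀ (by linarith)]
  nlinarith

theorem integral_cosDipControl_mul_cosDip (hε : 0 ≤ ε) (hε₁ : 2 * ε < 1) (a b : ℝ) :
    ∫ t in a..b, cosDipControl ε ω s t * cosDip ε ω s t =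
      cosDipDeriv ε ω s a - cosDipDeriv ε ω s b := by
  have h t : cosDipControl ε ω s t * cosDip ε ω s t = -cosDipDeriv2 ε ω s t := by
    rw [cosDipControl, neg_mul, div_mul_cancel₀ _ (cosDip_pos hε hε₁ t).ne']
  simp only [h, intervalIntegral.integral_neg, integral_cosDipDeriv2, neg_sub]

theorem integral_cosDipControl_neg (hε : 0 < ε) (hε₁ : 2 * ε < 1) {b : ℝ} (hsb : s < b)
    (hperiod : ω * (b - s) = 2 * π) :
    ∫ t in s..b, cosDipControl ε ω s t < 0 := by
  have hω : 0 < ω := pos_of_mul_pos_left (hperiod.trans_gt two_pi_pos) (sub_pos.2 hsb).le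
  have hquarter : ω * (s + (b - s) / 4 - s) = π / 2 := by
    rw [add_sub_cancel_left, ← mul_div_assoc, hperiod]
    ring
  simp only [cosDipControl, intervalIntegral.integral_neg, neg_lt_zero]
  refine integral_deriv2_div_pos hsb (fun t _ => hasDerivAt_cosDip ε ω s t)
    (fun t _ => hasDerivAt_cosDipDeriv ε ω s t) (continuous_cosDipDeriv2 ε ω s).continuousOn
    (fun t _ => (cosDip_pos hε.le hε₁ t).ne') (cosDipDeriv_eq_zero (by simp))
    (cosDipDeriv_eq_zero (by rw [hperiod, cos_two_pi]))
    ⟨s + (b - s) / 4, ⟨by linarith, by linarith⟩, ?_⟩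
  simp only [cosDipDeriv, hquarter, sin_pi_div_two, mul_one]
  exact neg_ne_zero.2 (mul_pos hε hω).ne'

end CosDip

/-- For all `s1 < s2` and `β > 0`, there exists an admissible loop on `[s1, s2]` from
`(β, 0)` back to `(β, 0)`, staying in `x ≤ β`, with negative cost. -/
theorem exists_negative_cost_loop (umin umax : ℝ) (humin : umin < 0) (humax : 0 < umax)
    (s1 s2 : ℝ) (hs : s1 < s2) (β : ℝ) (hβ : 0 < β) :
    ∃ x y u : ℝ → ℝ,
      Measurable u ∧
      (∀ᵐ t ∂(volume.restrict (Icc s1 s2)), umin ≤ u t ∧ u t ≤ umax) ∧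
      (∀ t ∈ Icc s1 s2, x t = x s1 + ∫ s in s1..t, y s) ∧
      (∀ t ∈ Icc s1 s2, y t = y s1 - ∫ s in s1..t, u s * x s) ∧
      x s1 = β ∧ x s2 = β ∧ y s1 = 0 ∧ y s2 = 0 ∧
      (∀ t ∈ Icc s1 s2, x t ≤ β) ∧
      (∫ t in s1..s2, u t) < 0 := by
  set ω := 2 * π / (s2 - s1)
  have hperiod : ω * (s2 - s1) = 2 * π := div_mul_cancel₀ _ (sub_pos.2 hs).ne'
  have hstart : cos (ω * (s1 - s1)) = 1 := by simp
  have hend : cos (ω * (s2 - s1)) = 1 := by rw [hperiod, cos_two_pi]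
  obtain ⟨ε, hε, hε₁, hbound⟩ :=
    exists_abs_cosDipControl_le (lt_min (neg_pos.2 humin) humax) ω s1
  refine ⟨fun t => β * cosDip ε ω s1 t, fun t => β * cosDipDeriv ε ω s1 t, cosDipControl ε ω s1,
    (continuous_cosDipControl hε.le hε₁).measurable, ae_of_all _ fun t => ?_, fun t _ => ?_,
    fun t _ => ?_, by simp [cosDip_eq_one hstart], by simp [cosDip_eq_one hend],
    by simp [cosDipDeriv_eq_zero hstart], by simp [cosDipDeriv_eq_zero hend],
    fun t _ => mul_le_of_le_one_right hβ.le (cosDip_le_one hε.le t),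
    integral_cosDipControl_neg hε hε₁ hs hperiod⟩
  · have := abs_le.1 (hbound t)
    constructor <;> linarith [min_le_left (-umin) umax, min_le_right (-umin) umax]
  · rw [intervalIntegral.integral_const_mul, integral_cosDipDeriv]
    ring
  · simp_rw [mul_left_comm _ β, intervalIntegral.integral_const_mul,
      integral_cosDipControl_mul_cosDip hε.le hε₁]
    ring

end
end

section
/- Let (x, y, u) be admissible on [0, T] with x(0) = x(T) = 1 and y(0) = y(T), and let p_x, p_y : [0, T] → ℝ satisfy p_x(t) = p_x(0) + ∫₀ᵗ u(s)·p_y(s) ds and p_y(t) = p_y(0) − ∫₀ᵗ p_x(s) ds for all t ∈ [0, T], together with p_y(0) = p_y(T). Then p_x(0) = p_x(T), i.e., the adjoint vector (p_x, p_y) is T-periodic. -/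
open MeasureTheory Real Set Filter Topology

noncomputable section

/-!
Along a solution of the state equations `x' = y`, `y' = -u x` and of the adjoint equations
`p_x' = u p_y`, `p_y' = -p_x`, the pairing `p_x x + p_y y` has derivative
`u p_y x + p_x y - p_x y - p_y u x = 0` almost everywhere. All four functions are absolutely
continuous, so the pairing takes the same value at `0` and `T`; with `x(0) = x(T) = 1`,
`y(0) = y(T)` and `p_y(0) = p_y(T)` this forces `p_x(0) = p_x(T)`.

Absolute continuity is not given: a non-integrable integrand makes the integral equations
degenerate to junk. The times `t` for which the solution is integrable on `[0, t]` form an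
interval, closed on the right by a Grönwall bound; past its end the integral equations would
freeze the solution at its initial value, which is integrable, so the interval is all of `[0, T]`.
-/

theorem AbsolutelyContinuousOnInterval.congr {X : Type*} [PseudoMetricSpace X] {f g : ℝ → X}
    {a b : ℝ}
    (hf : AbsolutelyContinuousOnInterval f a b) (hfg : EqOn f g (uIcc a b)) :
    AbsolutelyContinuousOnInterval g a b := by
  refine hf.congr' (eventually_inf_principal.2 (Eventually.of_forall fun E hE => ?_))
  refine Finset.sum_congr rfl fun i hi => ?_
  rw [hfg (hE.1 i hi).1, hfg (hE.1 i hi).2]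

theorem ContinuousOn.hasDerivWithinAt_integral_Ici {φ : ℝ → ℝ} {a b x : ℝ}
    (hφ : ContinuousOn φ (Icc a b)) (hx : x ∈ Ico a b) :
    HasDerivWithinAt (fun s => ∫ r in a..s, φ r) (φ x) (Ici x) x := by
  have hnhds : Icc a b ∈ 𝓝[Ioi x] x :=
    mem_of_superset (inter_mem_nhdsWithin _ (Iio_mem_nhds hx.2))
      fun z hz => ⟨hx.1.trans hz.1.le, hz.2.le⟩
  exact intervalIntegral.integral_hasDerivWithinAt_right
    ((hφ.mono (Icc_subset_Icc le_rfl hx.2.le)).intervalIntegrable_of_Icc hx.1)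
    ⟨Icc a b, hnhds, hφ.aestronglyMeasurable measurableSet_Icc⟩
    ((hφ x (Ico_subset_Icc_self hx)).mono_of_mem_nhdsWithin hnhds)

theorem le_mul_exp_of_le_add_mul_integral {φ : ℝ → ℝ} {C K a b : ℝ} (hK : 0 ≤ K)
    (hφ : ContinuousOn φ (Icc a b)) (h : ∀ s ∈ Icc a b, φ s ≤ C + K * ∫ r in a..s, φ r) :
    ∀ s ∈ Icc a b, φ s ≤ C * exp (K * (s - a)) := by
  have hH : ContinuousOn (fun s => ∫ r in a..s, φ r) (Icc a b) := by
    rcases le_or_gt a b with hab | hab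
    · have hφi : IntegrableOn φ (uIcc a b) := by
        rw [uIcc_of_le hab]; exact hφ.integrableOn_Icc
      simpa [uIcc_of_le hab] using intervalIntegral.continuousOn_primitive_interval hφi
    · simp [Icc_eq_empty_of_lt hab]
  have hgron := le_gronwallBound_of_liminf_deriv_right_le (δ := 0) (K := K) (ε := C) hH
    (fun x hx r hr => by
      simpa [slope_def_field, div_eq_inv_mul] using
        (hφ.hasDerivWithinAt_integral_Ici hx).liminf_right_slope_le hr)
    (by simp) (fun x hx => by linarith [h x (Ico_subset_Icc_self hx)])
  intro s hs
  have hbound : C + K * gronwallBound 0 K C (s - a) = C * exp (K * (s - a)) := by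
    rcases hK.eq_or_lt with rfl | hKpos
    · simp
    · rw [gronwallBound_of_K_ne_0 hKpos.ne']
      field_simp
      ring
  calc φ s ≤ C + K * ∫ r in a..s, φ r := h s hs
    _ ≤ C + K * gronwallBound 0 K C (s - a) := by gcongr; exact hgron s hs
    _ = C * exp (K * (s - a)) := hbound

theorem integrableOn_Icc_of_continuousOn_of_abs_le {g : ℝ → ℝ} {a b B : ℝ}
    (hc : ∀ t ∈ Ico a b, ContinuousOn g (Icc a t)) (hB : ∀ t ∈ Ico a b, |g t| ≤ B) :
    IntegrableOn g (Icc a b) := by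
  have hcIco : ContinuousOn g (Ico a b) := fun t ht => by
    obtain ⟨t', htt', ht'b⟩ := exists_between ht.2
    refine (hc t' ⟨ht.1.trans htt'.le, ht'b⟩ t ⟨ht.1, htt'.le⟩).mono_of_mem_nhdsWithin ?_
    exact mem_nhdsWithin.2 ⟨Iio t', isOpen_Iio, htt', fun z hz => ⟨hz.2.1, hz.1.le⟩⟩
  rw [integrableOn_Icc_iff_integrableOn_Ico]
  exact ⟨hcIco.aestronglyMeasurable measurableSet_Ico, .restrict_of_bounded B measure_Ico_lt_top
    ((ae_restrict_iff' measurableSet_Ico).2 (Eventually.of_forall hB))⟩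

/-- The integral is the junk value `0` when `w` is not integrable on `[0, t]`, so this alone says
nothing about the regularity of `F`. -/
def IsPrimitiveOn (T : ℝ) (F w : ℝ → ℝ) : Prop :=
  ∀ t ∈ Icc (0:ℝ) T, F t = F 0 + ∫ s in (0:ℝ)..t, w s

namespace IsPrimitiveOn

variable {T t s M : ℝ} {F G w a : ℝ → ℝ}

theorem of_eq_sub (h : ∀ t ∈ Icc (0:ℝ) T, F t = F 0 - ∫ s in (0:ℝ)..t, w s) :
    IsPrimitiveOn T F fun s => -w s := fun t ht => by
  rw [h t ht, intervalIntegral.integral_neg, sub_eq_add_neg]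

theorem mono (h : IsPrimitiveOn T F w) (ht : t ≤ T) : IsPrimitiveOn t F w :=
  fun s hs => h s ⟨hs.1, hs.2.trans ht⟩

theorem eq_of_not_integrableOn (h : IsPrimitiveOn T F w) (ht : t ∈ Icc 0 T)
    (hw : ¬ IntegrableOn w (Icc 0 t)) : F t = F 0 := by
  rw [integrableOn_Icc_iff_integrableOn_Ioc] at hw
  rw [h t ht, intervalIntegral.integral_of_le ht.1, integral_undef hw, add_zero]

theorem absolutelyContinuousOnInterval (h : IsPrimitiveOn T F w) (hT : 0 ≤ T)
    (hw : IntegrableOn w (Icc 0 T)) : AbsolutelyContinuousOnInterval F 0 T := by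
  have hwi : IntervalIntegrable w volume 0 T :=
    (intervalIntegrable_iff_integrableOn_Icc_of_le hT).2 hw
  refine (((LipschitzWith.const (F 0)).lipschitzOnWith.absolutelyContinuousOnInterval).add
    (hwi.absolutelyContinuousOnInterval_intervalIntegral (c := 0) (by simp))).congr ?_
  intro t ht
  rw [uIcc_of_le hT] at ht
  exact (h t ht).symm

theorem continuousOn (h : IsPrimitiveOn T F w) (hT : 0 ≤ T) (hw : IntegrableOn w (Icc 0 T)) :
    ContinuousOn F (Icc 0 T) := by
  simpa [uIcc_of_le hT] using (h.absolutelyContinuousOnInterval hT hw).continuousOn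

theorem ae_hasDerivAt (h : IsPrimitiveOn T F w) (hT : 0 ≤ T) (hw : IntegrableOn w (Icc 0 T)) :
    ∀ᵐ t, t ∈ Icc 0 T → HasDerivAt F (w t) t := by
  have hwi : IntervalIntegrable w volume 0 T :=
    (intervalIntegrable_iff_integrableOn_Icc_of_le hT).2 hw
  filter_upwards [hwi.ae_hasDerivAt_integral, Ioo_ae_eq_Icc (a := (0:ℝ)) (b := T) (μ := volume)]
    with t hderiv hIoo htIcc
  have htIoo : t ∈ Ioo 0 T := hIoo.mpr htIcc
  have hFt : F =ᶠ[𝓝 t] fun s => F 0 + ∫ r in (0:ℝ)..s, w r :=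
    eventually_of_mem (Icc_mem_nhds htIoo.1 htIoo.2) h
  exact ((hderiv (by rwa [uIcc_of_le hT]) 0 (by simp)).const_add (F 0)).congr_of_eventuallyEq hFt

theorem abs_le_add_mul_integral (hF : IsPrimitiveOn T F fun r => a r * G r)
    (haM : ∀ᵐ r ∂(volume.restrict (Icc 0 T)), |a r| ≤ M) (hG : ContinuousOn G (Icc 0 T))
    (hs : s ∈ Icc 0 T) : |F s| ≤ |F 0| + M * ∫ r in (0:ℝ)..s, |G r| := by
  have hbound : ∀ᵐ r, r ∈ Ioc 0 s → ‖a r * G r‖ ≤ M * |G r| := by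
    filter_upwards [(ae_restrict_iff' measurableSet_Icc).1 haM] with r hr hrs
    rw [Real.norm_eq_abs, abs_mul]
    exact mul_le_mul_of_nonneg_right (hr ⟨hrs.1.le, hrs.2.trans hs.2⟩) (abs_nonneg _)
  have hGi : IntervalIntegrable (fun r => M * |G r|) volume 0 s :=
    ((hG.abs.mono (Icc_subset_Icc le_rfl hs.2)).intervalIntegrable_of_Icc hs.1).const_mul M
  calc |F s| = |F 0 + ∫ r in (0:ℝ)..s, a r * G r| := by rw [← hF s hs]
    _ ≤ |F 0| + ‖∫ r in (0:ℝ)..s, a r * G r‖ := abs_add_le _ _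
    _ ≤ |F 0| + ∫ r in (0:ℝ)..s, M * |G r| := by
        gcongr; exact intervalIntegral.norm_integral_le_of_norm_le hs.1 hbound hGi
    _ = |F 0| + M * ∫ r in (0:ℝ)..s, |G r| := by rw [intervalIntegral.integral_const_mul]

end IsPrimitiveOn

section LinearSystem

variable {T M : ℝ} {a b f g : ℝ → ℝ}

theorem abs_add_abs_le_of_isPrimitiveOn (hM : 0 ≤ M)
    (haM : ∀ᵐ s ∂(volume.restrict (Icc 0 T)), |a s| ≤ M)
    (hbM : ∀ᵐ s ∂(volume.restrict (Icc 0 T)), |b s| ≤ M)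
    (hf : IsPrimitiveOn T f fun s => a s * g s) (hg : IsPrimitiveOn T g fun s => b s * f s)
    (hfc : ContinuousOn f (Icc 0 T)) (hgc : ContinuousOn g (Icc 0 T)) :
    ∀ s ∈ Icc 0 T, |f s| + |g s| ≤ (|f 0| + |g 0|) * exp (M * s) := by
  have hgron := le_mul_exp_of_le_add_mul_integral (φ := fun s => |f s| + |g s|)
      (C := |f 0| + |g 0|) hM (hfc.abs.add hgc.abs) fun s hs => by
    have hint : ∀ φ : ℝ → ℝ, ContinuousOn φ (Icc 0 T) →
        IntervalIntegrable (fun r => |φ r|) volume 0 s := fun φ hφ =>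
      (hφ.abs.mono (Icc_subset_Icc le_rfl hs.2)).intervalIntegrable_of_Icc hs.1
    have hfs := hf.abs_le_add_mul_integral haM hgc hs
    have hgs := hg.abs_le_add_mul_integral hbM hfc hs
    rw [intervalIntegral.integral_add (hint f hfc) (hint g hgc)]
    linarith
  simpa using hgron

theorem continuousOn_of_isPrimitiveOn_mul (hT : 0 ≤ T) (hM : 0 ≤ M)
    (ha : AEStronglyMeasurable a (volume.restrict (Icc 0 T)))
    (hb : AEStronglyMeasurable b (volume.restrict (Icc 0 T)))
    (haM : ∀ᵐ s ∂(volume.restrict (Icc 0 T)), |a s| ≤ M)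
    (hbM : ∀ᵐ s ∂(volume.restrict (Icc 0 T)), |b s| ≤ M)
    (hf : IsPrimitiveOn T f fun s => a s * g s) (hg : IsPrimitiveOn T g fun s => b s * f s) :
    ContinuousOn f (Icc 0 T) ∧ ContinuousOn g (Icc 0 T) := by
  have hbootstrap : ∀ t ∈ Icc 0 T, IntegrableOn g (Icc 0 t) →
      ContinuousOn f (Icc 0 t) ∧ ContinuousOn g (Icc 0 t) := by
    intro t ht hgi
    have hsub : Icc 0 t ⊆ Icc 0 T := Icc_subset_Icc le_rfl ht.2
    have hfc : ContinuousOn f (Icc 0 t) := (hf.mono ht.2).continuousOn ht.1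
      (hgi.bdd_mul (ha.mono_measure (Measure.restrict_mono hsub le_rfl))
        (ae_restrict_of_ae_restrict_of_subset hsub haM))
    exact ⟨hfc, (hg.mono ht.2).continuousOn ht.1
      (hfc.integrableOn_Icc.bdd_mul (hb.mono_measure (Measure.restrict_mono hsub le_rfl))
        (ae_restrict_of_ae_restrict_of_subset hsub hbM))⟩
  suffices IntegrableOn g (Icc 0 T) from hbootstrap T ⟨hT, le_rfl⟩ this
  set E := {t | t ∈ Icc 0 T ∧ IntegrableOn g (Icc 0 t)}
  have h0E : (0:ℝ) ∈ E := ⟨⟨le_rfl, hT⟩, by simp⟩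
  have hEbdd : BddAbove E := ⟨T, fun t ht => ht.1.2⟩
  set τ := sSup E
  have hτ0 : 0 ≤ τ := le_csSup hEbdd h0E
  have hτT : τ ≤ T := csSup_le ⟨0, h0E⟩ fun t ht => ht.1.2
  have hIco : ∀ t ∈ Ico 0 τ, t ∈ E := fun t ht => by
    obtain ⟨t', ht'E, htt'⟩ := exists_lt_of_lt_csSup ⟨0, h0E⟩ ht.2
    exact ⟨⟨ht.1, htt'.le.trans ht'E.1.2⟩, ht'E.2.mono_set (Icc_subset_Icc le_rfl htt'.le)⟩
  -- Grönwall bounds `g` on `[0, τ)` uniformly, so the supremum is attained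
  have hτE : IntegrableOn g (Icc 0 τ) := by
    refine integrableOn_Icc_of_continuousOn_of_abs_le
      (fun t ht => (hbootstrap t (hIco t ht).1 (hIco t ht).2).2)
      (B := (|f 0| + |g 0|) * exp (M * T)) fun t ht => ?_
    obtain ⟨htT, hgi⟩ := hIco t ht
    obtain ⟨hfc, hgc⟩ := hbootstrap t htT hgi
    calc |g t| ≤ |f t| + |g t| := le_add_of_nonneg_left (abs_nonneg _)
      _ ≤ (|f 0| + |g 0|) * exp (M * t) :=
        abs_add_abs_le_of_isPrimitiveOn hM
          (ae_restrict_of_ae_restrict_of_subset (Icc_subset_Icc le_rfl htT.2) haM)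
          (ae_restrict_of_ae_restrict_of_subset (Icc_subset_Icc le_rfl htT.2) hbM)
          (hf.mono htT.2) (hg.mono htT.2) hfc hgc t ⟨htT.1, le_rfl⟩
      _ ≤ (|f 0| + |g 0|) * exp (M * T) := by gcongr; exact htT.2
  -- beyond `τ` the integral defining `g` is the junk value `0`
  have hconst : ∀ t ∈ Ioc τ T, g t = g 0 := fun t ht =>
    hg.eq_of_not_integrableOn ⟨hτ0.trans ht.1.le, ht.2⟩ fun hbf =>
      (le_csSup hEbdd ⟨⟨hτ0.trans ht.1.le, ht.2⟩,
        ((hg.mono ht.2).continuousOn (hτ0.trans ht.1.le) hbf).integrableOn_Icc⟩).not_gt ht.1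
  rw [← Icc_union_Ioc_eq_Icc hτ0 hτT]
  exact hτE.union ((integrableOn_const measure_Ioc_lt_top.ne).congr_fun
    (fun t ht => (hconst t ht).symm) measurableSet_Ioc)

end LinearSystem

theorem adjoint_pairing_eq {T M : ℝ} {u x y px py : ℝ → ℝ} (hT : 0 ≤ T)
    (hu : AEStronglyMeasurable u (volume.restrict (Icc 0 T)))
    (huM : ∀ᵐ s ∂(volume.restrict (Icc 0 T)), |u s| ≤ M)
    (hx : IsPrimitiveOn T x y) (hy : IsPrimitiveOn T y fun s => -(u s * x s))
    (hpx : IsPrimitiveOn T px fun s => u s * py s) (hpy : IsPrimitiveOn T py fun s => -px s) :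
    px T * x T + py T * y T = px 0 * x 0 + py 0 * y 0 := by
  have hM₁ : 0 ≤ max M 1 := zero_le_one.trans (le_max_right M 1)
  have huM₁ : ∀ᵐ s ∂(volume.restrict (Icc 0 T)), |u s| ≤ max M 1 :=
    huM.mono fun s hs => hs.trans (le_max_left M 1)
  obtain ⟨hxc, hyc⟩ := continuousOn_of_isPrimitiveOn_mul (a := fun _ => 1) (b := fun s => -u s)
    hT hM₁ aestronglyMeasurable_const hu.neg (ae_of_all _ fun _ => by simp) (by simpa using huM₁)
    (by simpa using hx) (by simpa using hy)
  obtain ⟨hpxc, hpyc⟩ := continuousOn_of_isPrimitiveOn_mul (a := u) (b := fun _ => -1)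
    hT hM₁ hu aestronglyMeasurable_const huM₁ (ae_of_all _ fun _ => by simp)
    hpx (by simpa using hpy)
  have hyi : IntegrableOn y (Icc 0 T) := hyc.integrableOn_Icc
  have huxi : IntegrableOn (fun s => -(u s * x s)) (Icc 0 T) :=
    (hxc.integrableOn_Icc.bdd_mul hu huM).neg
  have hupyi : IntegrableOn (fun s => u s * py s) (Icc 0 T) := hpyc.integrableOn_Icc.bdd_mul hu huM
  have hpxi : IntegrableOn (fun s => -px s) (Icc 0 T) := hpxc.integrableOn_Icc.neg
  have hac : AbsolutelyContinuousOnInterval (fun t => px t * x t + py t * y t) 0 T :=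
    ((hpx.absolutelyContinuousOnInterval hT hupyi).fun_mul
      (hx.absolutelyContinuousOnInterval hT hyi)).fun_add
    ((hpy.absolutelyContinuousOnInterval hT hpxi).fun_mul
      (hy.absolutelyContinuousOnInterval hT huxi))
  obtain ⟨C, hC⟩ := hac.const_of_ae_hasDerivAt_zero <| by
    filter_upwards [hx.ae_hasDerivAt hT hyi, hy.ae_hasDerivAt hT huxi,
      hpx.ae_hasDerivAt hT hupyi, hpy.ae_hasDerivAt hT hpxi] with t hxt hyt hpxt hpyt ht
    rw [uIcc_of_le hT] at ht
    convert ((hpxt ht).fun_mul (hxt ht)).fun_add ((hpyt ht).fun_mul (hyt ht)) using 1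
    ring
  rw [hC 0 (by simp), hC T (by simp)]

theorem adjoint_periodic_general (umin umax : ℝ)
    (T : ℝ) (hT : 0 < T) (x y u : ℝ → ℝ) (hadm : OCAdmissible umin umax T x y u)
    (hx0 : x 0 = 1) (hxT : x T = 1) (hy : y 0 = y T)
    (px py : ℝ → ℝ)
    (hpx : ∀ t ∈ Icc (0:ℝ) T, px t = px 0 + ∫ s in (0:ℝ)..t, u s * py s)
    (hpy : ∀ t ∈ Icc (0:ℝ) T, py t = py 0 - ∫ s in (0:ℝ)..t, px s)
    (hpyper : py 0 = py T) :
    px 0 = px T := by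
  obtain ⟨hu, hubd, hxy, hyx⟩ := hadm
  have hpairing := adjoint_pairing_eq hT.le hu.aestronglyMeasurable
    (hubd.mono fun _ ht => abs_le_max_abs_abs ht.1 ht.2) hxy (.of_eq_sub hyx) hpx (.of_eq_sub hpy)
  rw [hx0, hxT, ← hy, ← hpyper] at hpairing
  linarith

/-- If `x(0) = x(T) = 1`, `y(0) = y(T)` and `p_y(0) = p_y(T)`, then `p_x(0) = p_x(T)`:
the adjoint vector is `T`-periodic. -/
theorem adjoint_periodic (umin umax : ℝ) (humin : umin < 0) (humax : 0 < umax)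
    (T : ℝ) (hT : 0 < T) (x y u : ℝ → ℝ) (hadm : OCAdmissible umin umax T x y u)
    (hx0 : x 0 = 1) (hxT : x T = 1) (hy : y 0 = y T)
    (px py : ℝ → ℝ)
    (hpx : ∀ t ∈ Icc (0:ℝ) T, px t = px 0 + ∫ s in (0:ℝ)..t, u s * py s)
    (hpy : ∀ t ∈ Icc (0:ℝ) T, py t = py 0 - ∫ s in (0:ℝ)..t, px s)
    (hpyper : py 0 = py T) :
    px 0 = px T :=
  adjoint_periodic_general umin umax T hT x y u hadm hx0 hxT hy px py hpx hpy hpyper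

end
end

section
/- Let (x, y, u) be a constrained-optimal triple on [0, T] and let (p_x, p_y, p⁰) be an extremal lift of it. Then the set I = {t ∈ [0, T] : p_y(t)·x(t) = p⁰} has Lebesgue measure zero; consequently, for almost every t ∈ [0, T], u(t) = u_min if −p_y(t)·x(t) + p⁰ < 0 and u(t) = u_max if −p_y(t)·x(t) + p⁰ > 0, i.e., the optimal control is bang-bang. -/
open MeasureTheory Real Set Filter Topology

noncomputable section

/-- A constrained-admissible triple on `[0, T]`: admissible with `x(0) = x(T) = 1`,
`y(0) = y(T) = 0` and `x(t) ≤ 1` on `[0, T]`. -/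
def OCConstrainedAdmissible (umin umax T : ℝ) (x y u : ℝ → ℝ) : Prop :=
  OCAdmissible umin umax T x y u ∧
  x 0 = 1 ∧ x T = 1 ∧ y 0 = 0 ∧ y T = 0 ∧ (∀ t ∈ Icc (0:ℝ) T, x t ≤ 1)

/-- A constrained-optimal triple on `[0, T]`. -/
def OCConstrainedOptimal (umin umax T : ℝ) (x y u : ℝ → ℝ) : Prop :=
  OCConstrainedAdmissible umin umax T x y u ∧
  ∀ x' y' u' : ℝ → ℝ, OCConstrainedAdmissible umin umax T x' y' u' →
    OCcost T u ≤ OCcost T u'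

/-- An extremal lift `(p_x, p_y, p⁰)` of an admissible triple `(x, y, u)` on `[0, T]`,
as given by the Pontryagin maximum principle: `p⁰ ≤ 0`, the adjoint integral equations,
nontriviality of `(p_x(T), p_y(T), p⁰)`, periodicity of `p_y`, the pointwise maximization
condition a.e., and constancy and nonnegativity of the maximized Hamiltonian. -/
def OCExtremalLift (umin umax T : ℝ) (x y u px py : ℝ → ℝ) (p0 : ℝ) : Prop :=
  p0 ≤ 0 ∧
  (∀ t ∈ Icc (0:ℝ) T, px t = px 0 + ∫ s in (0:ℝ)..t, u s * py s) ∧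
  (∀ t ∈ Icc (0:ℝ) T, py t = py 0 - ∫ s in (0:ℝ)..t, px s) ∧
  ((px T, py T, p0) : ℝ × ℝ × ℝ) ≠ (0, 0, 0) ∧
  py 0 = py T ∧
  (∀ᵐ t ∂(volume.restrict (Icc (0:ℝ) T)),
    (-py t * x t + p0) * u t =
      sSup ((fun v => (-py t * x t + p0) * v) '' Icc umin umax)) ∧
  (∃ c : ℝ, 0 ≤ c ∧ ∀ t ∈ Icc (0:ℝ) T,
    px t * y t + sSup ((fun v => v * (-py t * x t + p0)) '' Icc umin umax) = c)

/-!
The maximization condition gives `u = u_min` or `u = u_max` wherever the switching function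
`-p_y x + p⁰` is nonzero, so everything rests on the switching set `I = {p_y x = p⁰}` being null.

Both `(x, y)` and `(p_y, -p_x)` solve the linear system `f' = g`, `g' = -u f` (in integral form,
with `u` essentially bounded). Its solutions are continuous with `f' = g`, and by Grönwall a
solution vanishing at one point vanishes identically. If `I` were not null it would be closed
and uncountable, hence contain a nonempty perfect set `D`, and at every point of `D` the
derivative `-p_x x + p_y y` of `p_y x` vanishes.

If `p⁰ = 0`, then either `x` and `y`, or `p_x` and `p_y`, vanish together at a point of `D`,
contradicting `x(0) = 1` or the nontriviality of the lift. If `p⁰ < 0`, the level `c ≥ 0` of the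
Hamiltonian satisfies `(p_x x)² = p⁰ c ≤ 0` on `D`, so `c = 0` and `(x, y) = μ (p_y, -p_x)` with
`μ < 0`; then `p_x y = -μ p_x² ≤ c = 0` forces `y ≡ 0`, and the control has zero cost. But
`x = exp (δ (cos (2πt/T) - 1))` is a constrained-admissible competitor of cost `-∫ (x'/x)² < 0`.
-/

open scoped ENNReal

theorem le_mul_exp_of_le_add_integral {r : ℝ → ℝ} {a b δ C : ℝ} (hC : 0 ≤ C)
    (hr : ContinuousOn r (Icc a b))
    (hbound : ∀ t ∈ Icc a b, r t ≤ δ + ∫ s in a..t, C * r s) :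
    ∀ t ∈ Icc a b, r t ≤ δ * exp (C * (t - a)) := by
  set R : ℝ → ℝ := fun t => δ + ∫ s in a..t, C * r s
  have hCr : ContinuousOn (fun s => C * r s) (Icc a b) := continuousOn_const.mul hr
  have hR_deriv : ∀ t ∈ Icc a b, HasDerivWithinAt R (C * r t) (Icc a b) t := by
    intro t ht
    have : Fact (t ∈ Icc a b) := ⟨ht⟩
    exact (intervalIntegral.integral_hasDerivWithinAt_right
      ((hCr.mono (uIcc_subset_Icc ⟨le_rfl, ht.1.trans ht.2⟩ ht)).intervalIntegrable)
      (hCr.stronglyMeasurableAtFilter_nhdsWithin measurableSet_Icc t) (hCr t ht)).const_add δ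
  have hR_le : ∀ t ∈ Icc a b, R t ≤ gronwallBound δ C 0 (t - a) :=
    le_gronwallBound_of_liminf_deriv_right_le (fun t ht => (hR_deriv t ht).continuousWithinAt)
      (fun t ht _ hlt => ((hR_deriv t (Ico_subset_Icc_self ht)).mono_of_mem_nhdsWithin
        (Icc_mem_nhdsGE_of_mem ht)).liminf_right_slope_le hlt)
      (by simp [R]) fun t ht => by
        rw [add_zero]; exact mul_le_mul_of_nonneg_left (hbound t (Ico_subset_Icc_self ht)) hC
  intro t ht
  simpa [gronwallBound_ε0] using (hbound t ht).trans (hR_le t ht)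

theorem le_mul_exp_abs_of_le_add_abs_integral {r : ℝ → ℝ} {a b t₀ δ C : ℝ} (hC : 0 ≤ C)
    (hr : ContinuousOn r (Icc a b)) (hr₀ : ∀ t ∈ Icc a b, 0 ≤ r t) (ht₀ : t₀ ∈ Icc a b)
    (hbound : ∀ t ∈ Icc a b, r t ≤ δ + |∫ s in t₀..t, C * r s|) :
    ∀ t ∈ Icc a b, r t ≤ δ * exp (C * |t - t₀|) := by
  have integral_nonneg : ∀ {t t'}, t ≤ t' → Icc t t' ⊆ Icc a b → 0 ≤ ∫ s in t..t', C * r s :=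
    fun htt' hsub => intervalIntegral.integral_nonneg htt' fun s hs =>
      mul_nonneg hC (hr₀ s (hsub hs))
  intro t ht
  rcases le_total t₀ t with ht₀t | htt₀
  · have hsub : Icc t₀ b ⊆ Icc a b := Icc_subset_Icc_left ht₀.1
    have := le_mul_exp_of_le_add_integral hC (hr.mono hsub) (fun s hs => by
      simpa only [abs_of_nonneg (integral_nonneg hs.1 (Icc_subset_Icc_right hs.2 |>.trans hsub))]
        using hbound s (hsub hs)) t ⟨ht₀t, ht.2⟩
    rwa [abs_of_nonneg (sub_nonneg.2 ht₀t)]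
  · have hsub : Icc a t₀ ⊆ Icc a b := Icc_subset_Icc_right ht₀.2
    have hneg : ∀ s ∈ Icc (-t₀) (-a), -s ∈ Icc a t₀ := fun s hs => ⟨le_neg.1 hs.2, neg_le.1 hs.1⟩
    have := le_mul_exp_of_le_add_integral (r := fun s => r (-s)) hC
      ((hr.mono hsub).comp continuous_neg.continuousOn hneg) (fun s hs => by
        have hs' := hneg s hs
        rw [intervalIntegral.integral_comp_neg (fun x => C * r x), neg_neg]
        have h := hbound _ (hsub hs')
        rwa [intervalIntegral.integral_symm, abs_neg,
          abs_of_nonneg (integral_nonneg hs'.2 (Icc_subset_Icc_left hs'.1 |>.trans hsub))] at h)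
      (-t) ⟨neg_le_neg htt₀, neg_le_neg ht.1⟩
    rwa [neg_neg, neg_sub_neg, ← neg_sub, ← abs_of_nonpos (sub_nonpos.2 htt₀)] at this

theorem continuousOn_of_eq_add_integral {f g : ℝ → ℝ} {a b : ℝ}
    (hg : IntegrableOn g (Icc a b)) (hf : ∀ t ∈ Icc a b, f t = f a + ∫ s in a..t, g s) :
    ContinuousOn f (Icc a b) := by
  rcases lt_or_ge b a with hba | hab
  · simp [Icc_eq_empty_of_lt hba]
  rw [← uIcc_of_le hab] at hg ⊢
  exact (continuousOn_const.add (intervalIntegral.continuousOn_primitive_interval hg)).congr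
    fun t ht => hf t (by rwa [uIcc_of_le hab] at ht)

theorem hasDerivWithinAt_of_eq_add_integral {f g : ℝ → ℝ} {a b t : ℝ}
    (hg : ContinuousOn g (Icc a b)) (hf : ∀ t ∈ Icc a b, f t = f a + ∫ s in a..t, g s)
    (ht : t ∈ Icc a b) : HasDerivWithinAt f (g t) (Icc a b) t := by
  have : Fact (t ∈ Icc a b) := ⟨ht⟩
  exact ((intervalIntegral.integral_hasDerivWithinAt_right
    ((hg.mono (uIcc_subset_Icc (left_mem_Icc.2 (ht.1.trans ht.2)) ht)).intervalIntegrable)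
    (hg.stronglyMeasurableAtFilter_nhdsWithin measurableSet_Icc t) (hg t ht)).const_add
    (f a)).congr hf (hf t ht)

theorem HasDerivWithinAt.eq_zero_of_accPt {f : ℝ → ℝ} {d t : ℝ} {s D : Set ℝ}
    (hf : HasDerivWithinAt f d s t) (hDs : D ⊆ s) (hD : AccPt t (𝓟 D))
    (hfD : ∀ τ ∈ D, f τ = f t) : d = 0 :=
  hD.uniqueDiffWithinAt.eq_deriv _ (hf.mono hDs)
    ((hasDerivWithinAt_const t D (f t)).congr hfD rfl)

theorem aestronglyMeasurable_of_eq_add_integral {f g : ℝ → ℝ} {T : ℝ}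
    (hf : ∀ t ∈ Icc 0 T, f t = f 0 + ∫ s in 0..t, g s) :
    AEStronglyMeasurable f (volume.restrict (Icc 0 T)) := by
  -- `f` is a primitive of `g` on the initial segment `S` where `g` is integrable, and the
  -- junk value `∫ g = 0` makes it constant beyond
  set S := {t ∈ Icc (0:ℝ) T | IntervalIntegrable g volume 0 t}
  have hS : S.OrdConnected := ⟨fun a ha b hb t ht => ⟨⟨ha.1.1.trans ht.1, ht.2.trans hb.1.2⟩,
    hb.2.mono_set (uIcc_subset_uIcc left_mem_uIcc (Icc_subset_uIcc ⟨ha.1.1.trans ht.1, ht.2⟩))⟩⟩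
  have hf_cont : ∀ {t}, t ∈ S → ContinuousOn f (Icc 0 t) := fun ht =>
    continuousOn_of_eq_add_integral ((intervalIntegrable_iff_integrableOn_Icc_of_le ht.1.1).1 ht.2)
      fun s hs => hf s ⟨hs.1, hs.2.trans ht.1.2⟩
  have hfS : ContinuousOn f S := by
    intro t ht
    by_cases h : ∃ t' ∈ S, t < t'
    · obtain ⟨t', ht', htt'⟩ := h
      exact (hf_cont ht' t ⟨ht.1.1, htt'.le⟩).mono_of_mem_nhdsWithin
        (mem_nhdsWithin.2 ⟨Iio t', isOpen_Iio, htt', fun s hs => ⟨hs.2.1.1, hs.1.le⟩⟩)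
    · push Not at h
      exact (hf_cont ht t ⟨ht.1.1, le_rfl⟩).mono fun s hs => ⟨hs.1.1, h s hs⟩
  have hf_const : f =ᵐ[volume.restrict (Icc 0 T \ S)] fun _ => f 0 := by
    filter_upwards [ae_restrict_mem (measurableSet_Icc.diff hS.measurableSet)] with t ht
    rw [hf t ht.1, intervalIntegral.integral_undef fun h => ht.2 ⟨ht.1, h⟩, add_zero]
  rw [← union_sdiff_cancel (sep_subset _ _ : S ⊆ Icc 0 T)]
  exact aestronglyMeasurable_union_iff.2
    ⟨hfS.aestronglyMeasurable hS.measurableSet, aestronglyMeasurable_const.congr hf_const.symm⟩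

theorem abs_integral_add_abs_integral_le {A B R : ℝ → ℝ} {a b : ℝ}
    (hA : IntervalIntegrable A volume a b) (hB : IntervalIntegrable B volume a b)
    (hR : IntervalIntegrable R volume a b)
    (hle : ∀ᵐ s ∂volume.restrict (uIcc a b), |A s| + |B s| ≤ R s) :
    |∫ s in a..b, A s| + |∫ s in a..b, B s| ≤ |∫ s in a..b, R s| := by
  wlog hab : a ≤ b generalizing a b
  · simpa only [intervalIntegral.integral_symm a, abs_neg] using
      this hA.symm hB.symm hR.symm (by rwa [uIcc_comm]) (le_of_not_ge hab)
  rw [uIcc_of_le hab] at hle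
  calc |∫ s in a..b, A s| + |∫ s in a..b, B s|
      ≤ (∫ s in a..b, |A s|) + ∫ s in a..b, |B s| :=
        add_le_add (intervalIntegral.abs_integral_le_integral_abs hab)
          (intervalIntegral.abs_integral_le_integral_abs hab)
    _ = ∫ s in a..b, (|A s| + |B s|) := (intervalIntegral.integral_add hA.abs hB.abs).symm
    _ ≤ ∫ s in a..b, R s :=
        intervalIntegral.integral_mono_ae_restrict hab (hA.abs.add hB.abs) hR hle
    _ ≤ |∫ s in a..b, R s| := le_abs_self _

theorem abs_add_abs_le_mul_exp_of_eq_add_integral {f g A B : ℝ → ℝ} {T C t₀ : ℝ}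
    (hC : 0 ≤ C) (hA : IntegrableOn A (Icc 0 T)) (hB : IntegrableOn B (Icc 0 T))
    (hf : ∀ t ∈ Icc 0 T, f t = f 0 + ∫ s in 0..t, A s)
    (hg : ∀ t ∈ Icc 0 T, g t = g 0 + ∫ s in 0..t, B s)
    (hAB : ∀ᵐ s ∂volume.restrict (Icc 0 T), |A s| + |B s| ≤ C * (|f s| + |g s|))
    (ht₀ : t₀ ∈ Icc 0 T) :
    ∀ t ∈ Icc 0 T, |f t| + |g t| ≤ (|f t₀| + |g t₀|) * exp (C * |t - t₀|) := by
  have h0 : (0 : ℝ) ∈ Icc 0 T := left_mem_Icc.2 (ht₀.1.trans ht₀.2)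
  have hA' : ∀ {s t}, s ∈ Icc 0 T → t ∈ Icc 0 T → IntervalIntegrable A volume s t :=
    fun hs ht => (hA.mono_set (uIcc_subset_Icc hs ht)).intervalIntegrable
  have hB' : ∀ {s t}, s ∈ Icc 0 T → t ∈ Icc 0 T → IntervalIntegrable B volume s t :=
    fun hs ht => (hB.mono_set (uIcc_subset_Icc hs ht)).intervalIntegrable
  have hr : ContinuousOn (fun t => |f t| + |g t|) (Icc 0 T) :=
    (continuousOn_of_eq_add_integral hA hf).abs.add (continuousOn_of_eq_add_integral hB hg).abs
  have increment : ∀ {F G : ℝ → ℝ}, (∀ {s t}, s ∈ Icc 0 T → t ∈ Icc 0 T →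
      IntervalIntegrable G volume s t) → (∀ t ∈ Icc 0 T, F t = F 0 + ∫ s in 0..t, G s) →
      ∀ t ∈ Icc 0 T, F t = F t₀ + ∫ s in t₀..t, G s := by
    intro F G hG hF t ht
    rw [hF t ht, hF t₀ ht₀, ← intervalIntegral.integral_interval_sub_left (hG h0 ht) (hG h0 ht₀)]
    ring
  refine le_mul_exp_abs_of_le_add_abs_integral hC hr (fun t _ => by positivity) ht₀
    fun t ht => ?_
  have hsub := uIcc_subset_Icc ht₀ ht
  calc |f t| + |g t|
      ≤ |f t₀| + |g t₀| + (|∫ s in t₀..t, A s| + |∫ s in t₀..t, B s|) := by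
        rw [increment hA' hf t ht, increment hB' hg t ht]
        linarith [abs_add_le (f t₀) (∫ s in t₀..t, A s), abs_add_le (g t₀) (∫ s in t₀..t, B s)]
    _ ≤ |f t₀| + |g t₀| + |∫ s in t₀..t, C * (|f s| + |g s|)| :=
        add_le_add_right (abs_integral_add_abs_integral_le (hA' ht₀ ht) (hB' ht₀ ht)
          ((continuousOn_const.mul hr).mono hsub).intervalIntegrable
          (ae_restrict_of_ae_restrict_of_subset hsub hAB)) _

def IsHillSolution (T : ℝ) (u f g : ℝ → ℝ) : Prop :=
  (∀ t ∈ Icc (0:ℝ) T, f t = f 0 + ∫ s in (0:ℝ)..t, g s) ∧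
    ∀ t ∈ Icc (0:ℝ) T, g t = g 0 - ∫ s in (0:ℝ)..t, u s * f s

namespace IsHillSolution

variable {T : ℝ} {u f g f' g' : ℝ → ℝ}

theorem snd_eq_add_integral (h : IsHillSolution T u f g) :
    ∀ t ∈ Icc 0 T, g t = g 0 + ∫ s in 0..t, -(u s * f s) := fun t ht => by
  rw [h.2 t ht, intervalIntegral.integral_neg, sub_eq_add_neg]

theorem mono (h : IsHillSolution T u f g) {T' : ℝ} (hT' : T' ≤ T) : IsHillSolution T' u f g :=
  ⟨fun t ht => h.1 t ⟨ht.1, ht.2.trans hT'⟩, fun t ht => h.2 t ⟨ht.1, ht.2.trans hT'⟩⟩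

theorem abs_add_abs_le (h : IsHillSolution T u f g) {K : ℝ} (hK : 0 ≤ K)
    (huK : ∀ᵐ s ∂volume.restrict (Icc 0 T), |u s| ≤ K) (hg : IntegrableOn g (Icc 0 T))
    (huf : IntegrableOn (fun s => u s * f s) (Icc 0 T)) {t₀ : ℝ} (ht₀ : t₀ ∈ Icc 0 T) :
    ∀ t ∈ Icc 0 T, |f t| + |g t| ≤ (|f t₀| + |g t₀|) * exp ((K + 1) * |t - t₀|) := by
  refine abs_add_abs_le_mul_exp_of_eq_add_integral (by positivity) hg huf.neg h.1
    h.snd_eq_add_integral ?_ ht₀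
  filter_upwards [huK] with s hs
  simp only [Pi.neg_apply, abs_neg, abs_mul]
  nlinarith [abs_nonneg (f s), abs_nonneg (g s), abs_nonneg (u s)]

theorem exists_abs_fst_le (h : IsHillSolution T u f g)
    (hu : MemLp u ∞ (volume.restrict (Icc 0 T))) : ∃ M, ∀ t ∈ Icc 0 T, |f t| ≤ M := by
  set K := lpNorm u ∞ (volume.restrict (Icc 0 T))
  have hK : 0 ≤ K + 1 := add_nonneg lpNorm_nonneg zero_le_one
  refine ⟨(|f 0| + |g 0|) * exp ((K + 1) * T), fun t ht => ?_⟩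
  by_cases hgt : IntervalIntegrable g volume 0 t
  · have hsub : Icc 0 t ⊆ Icc 0 T := Icc_subset_Icc_right ht.2
    have hg : IntegrableOn g (Icc 0 t) :=
      (intervalIntegrable_iff_integrableOn_Icc_of_le ht.1).1 hgt
    have hbound := (h.mono ht.2).abs_add_abs_le lpNorm_nonneg
      (ae_restrict_of_ae_restrict_of_subset hsub (ae_le_lpNorm_exponent_top hu)) hg
      ((IntegrableOn.mono_set (hu.integrable le_top) hsub).mul_continuousOn
        (continuousOn_of_eq_add_integral hg (h.mono ht.2).1) isCompact_Icc)
      (left_mem_Icc.2 ht.1) t (right_mem_Icc.2 ht.1)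
    calc |f t| ≤ |f t| + |g t| := le_add_of_nonneg_right (abs_nonneg _)
      _ ≤ (|f 0| + |g 0|) * exp ((K + 1) * |t - 0|) := hbound
      _ ≤ (|f 0| + |g 0|) * exp ((K + 1) * T) := by
        rw [sub_zero, abs_of_nonneg ht.1]
        gcongr
        exact ht.2
  · -- junk value: the integral of a non-integrable `g` is `0`
    rw [h.1 t ht, intervalIntegral.integral_undef hgt, add_zero]
    have := le_mul_of_one_le_right (add_nonneg (abs_nonneg (f 0)) (abs_nonneg (g 0)))
      (one_le_exp (mul_nonneg hK (ht.1.trans ht.2)))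
    linarith [abs_nonneg (g 0)]

theorem integrableOn_snd (h : IsHillSolution T u f g)
    (hu : MemLp u ∞ (volume.restrict (Icc 0 T))) : IntegrableOn g (Icc 0 T) := by
  obtain ⟨M, hM⟩ := h.exists_abs_fst_le hu
  have huf : IntegrableOn (fun s => u s * f s) (Icc 0 T) :=
    (hu.integrable le_top).mul_bdd (aestronglyMeasurable_of_eq_add_integral h.1)
      (ae_restrict_of_forall_mem measurableSet_Icc hM)
  exact (continuousOn_of_eq_add_integral huf.neg h.snd_eq_add_integral).integrableOn_Icc

theorem continuousOn_fst (h : IsHillSolution T u f g)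
    (hu : MemLp u ∞ (volume.restrict (Icc 0 T))) : ContinuousOn f (Icc 0 T) :=
  continuousOn_of_eq_add_integral (h.integrableOn_snd hu) h.1

theorem integrableOn_mul_fst (h : IsHillSolution T u f g)
    (hu : MemLp u ∞ (volume.restrict (Icc 0 T))) :
    IntegrableOn (fun s => u s * f s) (Icc 0 T) :=
  IntegrableOn.mul_continuousOn (hu.integrable le_top) (h.continuousOn_fst hu) isCompact_Icc

theorem continuousOn_snd (h : IsHillSolution T u f g)
    (hu : MemLp u ∞ (volume.restrict (Icc 0 T))) : ContinuousOn g (Icc 0 T) :=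
  continuousOn_of_eq_add_integral (h.integrableOn_mul_fst hu).neg h.snd_eq_add_integral

theorem hasDerivWithinAt_fst (h : IsHillSolution T u f g)
    (hu : MemLp u ∞ (volume.restrict (Icc 0 T))) {t : ℝ} (ht : t ∈ Icc 0 T) :
    HasDerivWithinAt f (g t) (Icc 0 T) t :=
  hasDerivWithinAt_of_eq_add_integral (h.continuousOn_snd hu) h.1 ht

theorem eq_zero_of_eq_zero (h : IsHillSolution T u f g)
    (hu : MemLp u ∞ (volume.restrict (Icc 0 T))) {t₀ : ℝ} (ht₀ : t₀ ∈ Icc 0 T)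
    (hf₀ : f t₀ = 0) (hg₀ : g t₀ = 0) : ∀ t ∈ Icc 0 T, f t = 0 ∧ g t = 0 := by
  intro t ht
  have := h.abs_add_abs_le lpNorm_nonneg (ae_le_lpNorm_exponent_top hu) (h.integrableOn_snd hu)
    (h.integrableOn_mul_fst hu) ht₀ t ht
  rw [hf₀, hg₀, abs_zero, add_zero, zero_mul] at this
  exact ⟨abs_eq_zero.1 (by linarith [abs_nonneg (f t), abs_nonneg (g t)]),
    abs_eq_zero.1 (by linarith [abs_nonneg (f t), abs_nonneg (g t)])⟩

theorem sub_const_mul (h : IsHillSolution T u f g) (h' : IsHillSolution T u f' g')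
    (hu : MemLp u ∞ (volume.restrict (Icc 0 T))) (c : ℝ) :
    IsHillSolution T u (fun t => f t - c * f' t) (fun t => g t - c * g' t) := by
  have hii : ∀ {F : ℝ → ℝ}, IntegrableOn F (Icc 0 T) → ∀ t ∈ Icc 0 T,
      IntervalIntegrable F volume 0 t := fun hF t ht =>
    (hF.mono_set (uIcc_subset_Icc (left_mem_Icc.2 (ht.1.trans ht.2)) ht)).intervalIntegrable
  constructor
  · intro t ht
    dsimp only
    rw [intervalIntegral.integral_sub (hii (h.integrableOn_snd hu) t ht)
      ((hii (h'.integrableOn_snd hu) t ht).const_mul c), intervalIntegral.integral_const_mul,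
      h.1 t ht, h'.1 t ht]
    ring
  · intro t ht
    dsimp only
    simp_rw [mul_sub, mul_left_comm _ c]
    rw [intervalIntegral.integral_sub (hii (h.integrableOn_mul_fst hu) t ht)
      ((hii (h'.integrableOn_mul_fst hu) t ht).const_mul c), intervalIntegral.integral_const_mul,
      h.2 t ht, h'.2 t ht]
    ring

theorem snd_mul_add_mul_snd_eq_zero (h : IsHillSolution T u f g)
    (h' : IsHillSolution T u f' g') (hu : MemLp u ∞ (volume.restrict (Icc 0 T)))
    {D : Set ℝ} (hDT : D ⊆ Icc 0 T) {t : ℝ} (ht : t ∈ D) (hacc : AccPt t (𝓟 D))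
    (hD : ∀ τ ∈ D, f τ * f' τ = f t * f' t) : g t * f' t + f t * g' t = 0 :=
  ((h.hasDerivWithinAt_fst hu (hDT ht)).mul
    (h'.hasDerivWithinAt_fst hu (hDT ht))).eq_zero_of_accPt hDT hacc hD

theorem integral_eq_zero_of_snd_eq_zero (h : IsHillSolution T u f g) (hT : 0 ≤ T)
    (hf₀ : f 0 = 1) (hg : ∀ t ∈ Icc 0 T, g t = 0) : ∫ t in 0..T, u t = 0 := by
  have hsub : ∀ {t}, t ∈ Icc 0 T → uIcc 0 t ⊆ Icc 0 T := fun ht =>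
    uIcc_subset_Icc (left_mem_Icc.2 hT) ht
  have hf : ∀ t ∈ Icc 0 T, f t = 1 := fun t ht => by
    rw [h.1 t ht, hf₀, intervalIntegral.integral_congr (g := fun _ => 0)
      fun s hs => hg s (hsub ht hs), intervalIntegral.integral_zero, add_zero]
  have hT' := h.2 T (right_mem_Icc.2 hT)
  rw [hg T (right_mem_Icc.2 hT), hg 0 (left_mem_Icc.2 hT), intervalIntegral.integral_congr
    (g := u) fun s hs => by rw [hf s (hsub (right_mem_Icc.2 hT) hs), mul_one]] at hT'
  linarith

end IsHillSolution

theorem sSup_image_const_mul_Icc {a b : ℝ} (hab : a ≤ b) (φ : ℝ) :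
    sSup ((fun v => φ * v) '' Icc a b) = max (φ * a) (φ * b) := by
  refine IsGreatest.csSup_eq ⟨?_, ?_⟩
  · rcases le_total (φ * a) (φ * b) with h | h
    · rw [max_eq_right h]; exact mem_image_of_mem _ (right_mem_Icc.2 hab)
    · rw [max_eq_left h]; exact mem_image_of_mem _ (left_mem_Icc.2 hab)
  · rintro _ ⟨v, hv, rfl⟩
    rcases le_total 0 φ with hφ | hφ
    · exact le_max_of_le_right (mul_le_mul_of_nonneg_left hv.2 hφ)
    · exact le_max_of_le_left (mul_le_mul_of_nonpos_left hv.1 hφ)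

theorem eq_of_mul_eq_sSup_image_const_mul {a b φ w : ℝ} (hab : a ≤ b)
    (h : φ * w = sSup ((fun v => φ * v) '' Icc a b)) : (φ < 0 → w = a) ∧ (0 < φ → w = b) := by
  rw [sSup_image_const_mul_Icc hab] at h
  exact ⟨fun hφ => mul_left_cancel₀ hφ.ne
      (h.trans (max_eq_left (mul_le_mul_of_nonpos_left hab hφ.le))),
    fun hφ => mul_left_cancel₀ hφ.ne'
      (h.trans (max_eq_right (mul_le_mul_of_nonneg_left hab hφ.le)))⟩

theorem ocConstrainedAdmissible_exp {umin umax T : ℝ} {w w' w'' : ℝ → ℝ}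
    (hw : ∀ t, HasDerivAt w (w' t) t) (hw' : ∀ t, HasDerivAt w' (w'' t) t)
    (hw''_cont : Continuous w'') (hw_nonpos : ∀ t, w t ≤ 0) (hw₀ : w 0 = 0) (hwT : w T = 0)
    (hw'₀ : w' 0 = 0) (hw'T : w' T = 0)
    (hbound : ∀ t, |w'' t + w' t ^ 2| ≤ min (-umin) umax) :
    OCConstrainedAdmissible umin umax T (fun t => exp (w t)) (fun t => w' t * exp (w t))
      (fun t => -(w'' t + w' t ^ 2)) := by
  have hw_cont : Continuous w := continuous_iff_continuousAt.2 fun t => (hw t).continuousAt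
  have hw'_cont : Continuous w' := continuous_iff_continuousAt.2 fun t => (hw' t).continuousAt
  have hu_cont : Continuous fun t => -(w'' t + w' t ^ 2) := (hw''_cont.add (hw'_cont.pow 2)).neg
  have hu_mem : ∀ t, umin ≤ -(w'' t + w' t ^ 2) ∧ -(w'' t + w' t ^ 2) ≤ umax := fun t => by
    have := abs_le.1 (hbound t)
    constructor <;> linarith [min_le_left (-umin) umax, min_le_right (-umin) umax]
  have hx : ∀ t, HasDerivAt (fun t => exp (w t)) (w' t * exp (w t)) t := fun t => by
    simpa only [mul_comm] using (hw t).exp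
  have hy : ∀ t, HasDerivAt (fun t => w' t * exp (w t))
      (-(-(w'' t + w' t ^ 2) * exp (w t))) t := fun t =>
    ((hw' t).mul (hx t)).congr_deriv (by ring)
  refine ⟨⟨hu_cont.measurable, ae_of_all _ hu_mem, fun t _ => ?_, fun t _ => ?_⟩,
    by simp [hw₀], by simp [hwT], by simp [hw'₀], by simp [hw'T],
    fun t _ => exp_le_one_iff.2 (hw_nonpos t)⟩
  · rw [intervalIntegral.integral_eq_sub_of_hasDerivAt (fun s _ => hx s)
      ((hw'_cont.mul (continuous_exp.comp hw_cont)).intervalIntegrable _ _)]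
    ring
  · have := intervalIntegral.integral_eq_sub_of_hasDerivAt (fun s _ => hy s)
      ((hu_cont.mul (continuous_exp.comp hw_cont)).neg.intervalIntegrable 0 t)
    rw [intervalIntegral.integral_neg] at this
    linarith

theorem ocCost_eq_neg_integral_sq {T : ℝ} {w' w'' : ℝ → ℝ}
    (hw' : ∀ t, HasDerivAt w' (w'' t) t) (hw''_cont : Continuous w'') (hw'₀ : w' 0 = 0)
    (hw'T : w' T = 0) : OCcost T (fun t => -(w'' t + w' t ^ 2)) = -∫ t in 0..T, w' t ^ 2 := by
  have hw'_cont : Continuous w' := continuous_iff_continuousAt.2 fun t => (hw' t).continuousAt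
  rw [OCcost, intervalIntegral.integral_neg,
    intervalIntegral.integral_add (g := fun t => w' t ^ 2) (hw''_cont.intervalIntegrable _ _)
      ((hw'_cont.pow 2).intervalIntegrable _ _),
    intervalIntegral.integral_eq_sub_of_hasDerivAt (fun t _ => hw' t)
      (hw''_cont.intervalIntegrable _ _), hw'₀, hw'T, sub_zero, zero_add]

theorem abs_neg_mul_cos_add_sq_le {δ ω θ : ℝ} (hδ₀ : 0 ≤ δ) (hδ₁ : δ ≤ 1) :
    |-(δ * ω ^ 2) * cos θ + (-(δ * ω) * sin θ) ^ 2| ≤ 2 * δ * ω ^ 2 := by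
  have hcos := abs_le.1 (abs_cos_le_one θ)
  have hsin := sin_sq_le_one θ
  have hP : 0 ≤ δ * ω ^ 2 := by positivity
  rw [abs_le]
  constructor
  · nlinarith [mul_nonneg hP (by linarith : 0 ≤ 1 - cos θ),
      mul_nonneg (mul_nonneg hδ₀ hP) (sq_nonneg (sin θ))]
  · nlinarith [mul_nonneg hP (by linarith : 0 ≤ cos θ + 1),
      mul_nonneg (mul_nonneg hδ₀ hP) (by linarith : 0 ≤ 1 - sin θ ^ 2),
      mul_nonneg hP (sub_nonneg.2 hδ₁)]

theorem exists_ocConstrainedAdmissible_ocCost_neg {umin umax T : ℝ} (humin : umin < 0)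
    (humax : 0 < umax) (hT : 0 < T) :
    ∃ x y u, OCConstrainedAdmissible umin umax T x y u ∧ OCcost T u < 0 := by
  set ω := 2 * π / T
  set δ := min 1 (min (-umin) umax / (2 * ω ^ 2))
  have hω : 0 < ω := by positivity
  have hωT : ω * T = 2 * π := div_mul_cancel₀ _ hT.ne'
  have hδ : 0 < δ := lt_min one_pos (div_pos (lt_min (neg_pos.2 humin) humax) (by positivity))
  have hδω : 2 * δ * ω ^ 2 ≤ min (-umin) umax := by
    have := min_le_right 1 (min (-umin) umax / (2 * ω ^ 2))
    rw [le_div_iff₀ (by positivity)] at this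
    linarith
  have hw : ∀ t, HasDerivAt (fun t => δ * (cos (ω * t) - 1)) (-(δ * ω) * sin (ω * t)) t :=
    fun t => (((hasDerivAt_id t).const_mul ω).cos.sub_const 1 |>.const_mul δ).congr_deriv
      (by simp; ring)
  have hw' : ∀ t, HasDerivAt (fun t => -(δ * ω) * sin (ω * t)) (-(δ * ω ^ 2) * cos (ω * t)) t :=
    fun t => (((hasDerivAt_id t).const_mul ω).sin.const_mul (-(δ * ω))).congr_deriv
      (by simp; ring)
  refine ⟨_, _, _, ocConstrainedAdmissible_exp hw hw' (by fun_prop)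
    (fun t => by nlinarith [cos_le_one (ω * t)]) (by simp) (by simp [hωT]) (by simp)
    (by simp [hωT]) fun t => (abs_neg_mul_cos_add_sq_le hδ.le (min_le_left _ _)).trans hδω, ?_⟩
  rw [ocCost_eq_neg_integral_sq hw' (by fun_prop) (by simp) (by simp [hωT])]
  have hsq : ∫ t in 0..T, (-(δ * ω) * sin (ω * t)) ^ 2 = (δ * ω) ^ 2 * (T / 2) := by
    simp_rw [mul_pow, neg_sq]
    rw [intervalIntegral.integral_const_mul,
      intervalIntegral.integral_comp_mul_left (fun t => sin t ^ 2) hω.ne', integral_sin_sq]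
    simp [hωT]
    field_simp
    linarith
  rw [hsq]
  nlinarith [mul_pos (pow_pos (mul_pos hδ hω) 2) hT]

section OptimalControl

variable {umin umax T : ℝ} {x y u px py : ℝ → ℝ} {p0 : ℝ}

theorem OCAdmissible.memLp_top (h : OCAdmissible umin umax T x y u) :
    MemLp u ∞ (volume.restrict (Icc 0 T)) :=
  memLp_of_bounded h.2.1 h.1.aestronglyMeasurable ∞

theorem OCAdmissible.isHillSolution (h : OCAdmissible umin umax T x y u) :
    IsHillSolution T u x y :=
  h.2.2

theorem OCExtremalLift.isHillSolution (h : OCExtremalLift umin umax T x y u px py p0) :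
    IsHillSolution T u py fun t => -px t :=
  ⟨fun t ht => by rw [h.2.2.1 t ht, intervalIntegral.integral_neg, sub_eq_add_neg],
    fun t ht => by dsimp only; rw [h.2.1 t ht]; ring⟩

theorem OCExtremalLift.exists_hamiltonian_level
    (h : OCExtremalLift umin umax T x y u px py p0) (humin : umin ≤ 0) (humax : 0 ≤ umax) :
    ∃ c, 0 ≤ c ∧ (∀ t ∈ Icc 0 T, px t * y t ≤ c) ∧
      ∀ t ∈ Icc 0 T, py t * x t = p0 → px t * y t = c := by
  obtain ⟨c, hc, hH⟩ := h.2.2.2.2.2.2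
  have hmax : ∀ φ, sSup ((fun v => v * φ) '' Icc umin umax) = max (φ * umin) (φ * umax) :=
    fun φ => by simp_rw [mul_comm _ φ]; exact sSup_image_const_mul_Icc (humin.trans humax) φ
  refine ⟨c, hc, fun t ht => ?_, fun t ht hφ => ?_⟩
  · have hmax_nonneg : 0 ≤ max ((-py t * x t + p0) * umin) ((-py t * x t + p0) * umax) :=
      (le_total 0 (-py t * x t + p0)).elim (fun h => le_max_of_le_right (mul_nonneg h humax))
        fun h => le_max_of_le_left (mul_nonneg_of_nonpos_of_nonpos h humin)
    linarith [hmax (-py t * x t + p0) ▸ hH t ht]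
  · have := hmax (-py t * x t + p0) ▸ hH t ht
    rwa [show -py t * x t + p0 = 0 by linarith, zero_mul, zero_mul, max_self, add_zero] at this

theorem OCConstrainedOptimal.exists_snd_ne_zero
    (hopt : OCConstrainedOptimal umin umax T x y u) (humin : umin < 0) (humax : 0 < umax)
    (hT : 0 < T) : ∃ t ∈ Icc 0 T, y t ≠ 0 := by
  by_contra! hy
  obtain ⟨x', y', u', hadm', hcost'⟩ := exists_ocConstrainedAdmissible_ocCost_neg humin humax hT
  have hcost := hopt.2 x' y' u' hadm'
  rw [OCcost, hopt.1.1.isHillSolution.integral_eq_zero_of_snd_eq_zero hT.le hopt.1.2.1 hy]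
    at hcost
  linarith

theorem OCExtremalLift.eq_empty_of_perfect_of_abnormal (hadm : OCAdmissible umin umax T x y u)
    (hx₀ : x 0 = 1) (hlift : OCExtremalLift umin umax T x y u px py 0) {D : Set ℝ}
    (hD : Perfect D) (hDT : D ⊆ Icc 0 T) (hDφ : ∀ t ∈ D, py t * x t = 0) : D = ∅ := by
  by_contra hne
  obtain ⟨t₀, ht₀⟩ := nonempty_iff_ne_empty.2 hne
  have hu := hadm.memLp_top
  have hT : 0 ≤ T := (hDT ht₀).1.trans (hDT ht₀).2
  by_cases hx : ∀ t ∈ D, x t = 0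
  · have hy₀ : y t₀ = 0 :=
      (hadm.isHillSolution.hasDerivWithinAt_fst hu (hDT ht₀)).eq_zero_of_accPt hDT
        (hD.acc t₀ ht₀) fun t ht => by rw [hx t ht, hx t₀ ht₀]
    have := (hadm.isHillSolution.eq_zero_of_eq_zero hu (hDT ht₀) (hx t₀ ht₀) hy₀ 0
      (left_mem_Icc.2 hT)).1
    exact one_ne_zero (hx₀ ▸ this)
  · push Not at hx
    obtain ⟨t₁, ht₁, hxt₁⟩ := hx
    have hpy : py t₁ = 0 := (mul_eq_zero.1 (hDφ t₁ ht₁)).resolve_right hxt₁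
    have hderiv := hlift.isHillSolution.snd_mul_add_mul_snd_eq_zero hadm.isHillSolution hu hDT
      ht₁ (hD.acc t₁ ht₁) fun t ht => (hDφ t ht).trans (hDφ t₁ ht₁).symm
    rw [hpy, zero_mul, add_zero, neg_mul, neg_eq_zero] at hderiv
    have hpx : px t₁ = 0 := (mul_eq_zero.1 hderiv).resolve_right hxt₁
    have := hlift.isHillSolution.eq_zero_of_eq_zero hu (hDT ht₁) hpy (by simp [hpx]) T
      (right_mem_Icc.2 hT)
    exact hlift.2.2.2.1 (by simp [this.1, neg_eq_zero.1 this.2])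

theorem OCExtremalLift.eq_empty_of_perfect_of_normal (hadm : OCAdmissible umin umax T x y u)
    (hy : ∃ t ∈ Icc 0 T, y t ≠ 0) (hlift : OCExtremalLift umin umax T x y u px py p0)
    (hp0 : p0 < 0) (humin : umin ≤ 0) (humax : 0 ≤ umax) {D : Set ℝ} (hD : Perfect D)
    (hDT : D ⊆ Icc 0 T) (hDφ : ∀ t ∈ D, py t * x t = p0) : D = ∅ := by
  by_contra hne
  obtain ⟨t₀, ht₀⟩ := nonempty_iff_ne_empty.2 hne
  have hu := hadm.memLp_top
  obtain ⟨c, hc, hH_le, hH_eq⟩ := hlift.exists_hamiltonian_level humin humax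
  have hφ := hDφ t₀ ht₀
  have hH := hH_eq t₀ (hDT ht₀) hφ
  have hderiv := hlift.isHillSolution.snd_mul_add_mul_snd_eq_zero hadm.isHillSolution hu hDT ht₀
    (hD.acc t₀ ht₀) fun t ht => (hDφ t ht).trans hφ.symm
  have hsq : (px t₀ * x t₀) ^ 2 = p0 * c := by
    rw [← hφ, ← hH]; linear_combination (-(px t₀ * x t₀)) * hderiv
  have hpxx : px t₀ * x t₀ = 0 := pow_eq_zero_iff two_ne_zero |>.1
    (le_antisymm (hsq ▸ mul_nonpos_of_nonpos_of_nonneg hp0.le hc) (sq_nonneg _))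
  have hx : x t₀ ≠ 0 := fun h => hp0.ne (by rw [← hφ, h, mul_zero])
  have hpy : py t₀ ≠ 0 := fun h => hp0.ne (by rw [← hφ, h, zero_mul])
  have hpx : px t₀ = 0 := (mul_eq_zero.1 hpxx).resolve_right hx
  have hy₀ : y t₀ = 0 := by
    rw [hpx, neg_zero, zero_mul, zero_add] at hderiv
    exact (mul_eq_zero.1 hderiv).resolve_left hpy
  set μ := x t₀ / py t₀
  have hμ : μ < 0 := by
    have : μ * p0 = x t₀ ^ 2 := by rw [← hφ, ← mul_assoc, div_mul_cancel₀ _ hpy, sq]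
    nlinarith [pow_pos (abs_pos.2 hx) 2, sq_abs (x t₀)]
  have hzero := (hadm.isHillSolution.sub_const_mul hlift.isHillSolution hu μ).eq_zero_of_eq_zero
    hu (hDT ht₀) (by simp only [μ, div_mul_cancel₀ _ hpy, sub_self]) (by simp [hy₀, hpx])
  obtain ⟨t, ht, hyt⟩ := hy
  have hyt' : y t = -μ * px t := by linarith [(hzero t ht).2]
  have hpxt : px t = 0 := by
    have h := hH_le t ht
    rw [hyt', ← hH, hpx, zero_mul] at h
    exact pow_eq_zero_iff two_ne_zero |>.1 (le_antisymm (by nlinarith) (sq_nonneg _))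
  exact hyt (by rw [hyt', hpxt, mul_zero])

end OptimalControl

/-- For a constrained-optimal triple with extremal lift `(p_x, p_y, p⁰)`, the set where
the switching function `−p_y·x + p⁰` vanishes has Lebesgue measure zero; consequently the
optimal control is bang-bang almost everywhere. -/
theorem switching_set_null_and_bangbang (umin umax : ℝ)
    (humin : umin < 0) (humax : 0 < umax)
    (T : ℝ) (hT : 0 < T) (x y u px py : ℝ → ℝ) (p0 : ℝ)
    (hopt : OCConstrainedOptimal umin umax T x y u)
    (hlift : OCExtremalLift umin umax T x y u px py p0) :
    volume {t : ℝ | t ∈ Icc (0:ℝ) T ∧ py t * x t = p0} = 0 ∧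
    (∀ᵐ t ∂(volume.restrict (Icc (0:ℝ) T)),
      (-py t * x t + p0 < 0 → u t = umin) ∧ (0 < -py t * x t + p0 → u t = umax)) := by
  have hadm := hopt.1.1
  have hu := hadm.memLp_top
  refine ⟨?_, ?_⟩
  · by_contra hI
    have hclosed : IsClosed {t : ℝ | t ∈ Icc (0:ℝ) T ∧ py t * x t = p0} :=
      ((hlift.isHillSolution.continuousOn_fst hu).mul
        (hadm.isHillSolution.continuousOn_fst hu)).preimage_isClosed_of_isClosed isClosed_Icc
        isClosed_singleton
    obtain ⟨D, hD, hDne, hDI⟩ := exists_perfect_nonempty_of_isClosed_of_not_countable hclosed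
      fun hc => hI (hc.measure_zero _)
    refine hDne.ne_empty ?_
    rcases hlift.1.eq_or_lt with hp0 | hp0
    · subst hp0
      exact hlift.eq_empty_of_perfect_of_abnormal hadm hopt.1.2.1 hD (fun t ht => (hDI ht).1)
        fun t ht => (hDI ht).2
    · exact hlift.eq_empty_of_perfect_of_normal hadm (hopt.exists_snd_ne_zero humin humax hT) hp0
        humin.le humax.le hD (fun t ht => (hDI ht).1) fun t ht => (hDI ht).2
  · filter_upwards [hlift.2.2.2.2.2.1] with t ht
    exact eq_of_mul_eq_sSup_image_const_mul (humin.trans humax).le ht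

end
end

section
/- Let t1 ∈ (0, t1*), T = T(t1), and M = u_max − u_min. Define ψ : [−T/2, T/2] → ℝ by ψ(t) = cos(ω_max·t) for |t| ≤ t1 and ψ(t) = cos(ω_max·t1)·cosh(ω_min·(|t| − t1)) − (ω_max/ω_min)·sin(ω_max·t1)·sinh(ω_min·(|t| − t1)) for t1 ≤ |t| ≤ T/2, and let V(t) = 0 if |t| ≤ t1 and V(t) = M if t1 < |t| ≤ T/2. Then ψ is of class C¹ on [−T/2, T/2], twice differentiable at every t ∈ (−T/2, T/2) with |t| ≠ t1, ψ(−T/2) = ψ(T/2), ψ′(−T/2) = ψ′(T/2) = 0, and −ψ″(t) + V(t)·ψ(t) = u_max·ψ(t) for every t ∈ (−T/2, T/2) with |t| ≠ t1; that is, ψ is a nontrivial periodic eigenfunction of the Schrödinger operator −d²/dt² + V with eigenvalue u_max. -/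
/-!
On `[-t1, t1]` the function `cos (ω_max t)` solves `ψ'' = -u_max ψ`; on either side `ψ` is the
solution of `ψ'' = ω_min² ψ = -u_min ψ` matching it in value and slope at `±t1`, so `ψ` is even,
`C¹`, and satisfies `-ψ'' + V ψ = u_max ψ` away from `±t1`. With `k = (ω_max/ω_min) tan (ω_max t1)`,
the slope of the outer piece at `t` is proportional to `sinh L - k cosh L` with
`L = ω_min (t - t1)`, and `T` is defined exactly so that `ω_min (T/2 - t1) = artanh k`, which makes
it vanish at `T/2`; the condition `t1 < t1*` is `0 < k < 1`.
-/

open MeasureTheory Real Set Filter Topology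

noncomputable section

section Gluing

variable {E : Type*} [NormedAddCommGroup E] [NormedSpace ℝ E] {u v u' v' : ℝ → E} {c t : ℝ}
  {d : E}

theorem HasDerivAt.ite_le_of_lt (hu : HasDerivAt u d t) (ht : t < c) :
    HasDerivAt (fun s => if s ≤ c then u s else v s) d t :=
  hu.congr_of_eventuallyEq <| by
    filter_upwards [Iio_mem_nhds ht] with s hs using if_pos hs.le

theorem HasDerivAt.ite_le_of_gt (hv : HasDerivAt v d t) (ht : c < t) :
    HasDerivAt (fun s => if s ≤ c then u s else v s) d t :=
  hv.congr_of_eventuallyEq <| by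
    filter_upwards [Ioi_mem_nhds ht] with s hs using if_neg (not_le.mpr hs)

theorem hasDerivAt_ite_le_s14 (hu : ∀ t, HasDerivAt u (u' t) t) (hv : ∀ t, HasDerivAt v (v' t) t)
    (hc : u c = v c) (hc' : u' c = v' c) (t : ℝ) :
    HasDerivAt (fun s => if s ≤ c then u s else v s) (if t ≤ c then u' t else v' t) t := by
  rcases lt_trichotomy t c with h | rfl | h
  · rw [if_pos h.le]
    exact (hu t).ite_le_of_lt h
  · rw [if_pos le_rfl]
    have hIic : HasDerivWithinAt (fun s => if s ≤ t then u s else v s) (u' t) (Iic t) t :=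
      (hu t).hasDerivWithinAt.congr (fun s hs => if_pos hs) (if_pos le_rfl)
    have hIci : HasDerivWithinAt (fun s => if s ≤ t then u s else v s) (u' t) (Ici t) t := by
      refine (hc' ▸ hv t).hasDerivWithinAt.congr (fun s hs => ?_) (by simp [hc])
      rcases eq_or_lt_of_le (mem_Ici.mp hs) with rfl | hs
      · simp [hc]
      · exact if_neg (not_le.mpr hs)
    simpa [Iic_union_Ici] using hIic.union hIci
  · rw [if_neg (not_le.mpr h)]
    exact (hv t).ite_le_of_gt h

end Gluing

theorem sinh_artanh_eq_mul_cosh {x : ℝ} (hx : x ∈ Ioo (-1) 1) :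
    sinh (artanh x) = x * cosh (artanh x) := by
  rw [sinh_artanh hx, cosh_artanh hx]
  ring

theorem tan_mem_Ioo_of_mem_Ioo_arctan {θ x : ℝ} (h : θ ∈ Ioo 0 (arctan x)) : tan θ ∈ Ioo 0 x :=
  ⟨tan_pos_of_pos_of_lt_pi_div_two h.1 (h.2.trans (arctan_lt_pi_div_two x)), by
    simpa [tan_arctan] using
      tan_lt_tan_of_nonneg_of_lt_pi_div_two h.1.le (arctan_lt_pi_div_two x) h.2⟩

theorem div_mul_tan_mem_Ioo {a b θ : ℝ} (ha : 0 < a) (hb : 0 < b)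
    (hθ : θ ∈ Ioo 0 (arctan (b / a))) : a / b * tan θ ∈ Ioo 0 1 := by
  obtain ⟨htan_pos, htan_lt⟩ := tan_mem_Ioo_of_mem_Ioo_arctan hθ
  refine ⟨by positivity, ?_⟩
  calc a / b * tan θ < a / b * (b / a) := mul_lt_mul_of_pos_left htan_lt (by positivity)
    _ = 1 := by field_simp

namespace FiniteWell

variable (a b t1 : ℝ)

/-- The solution of `y'' = b² y` that matches `cos (a t)` to first order at `t = t1`. -/
def outer (t : ℝ) : ℝ :=
  cos (a * t1) * cosh (b * (t - t1)) - a / b * sin (a * t1) * sinh (b * (t - t1))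

def outerDeriv (t : ℝ) : ℝ :=
  b * (cos (a * t1) * sinh (b * (t - t1)) - a / b * sin (a * t1) * cosh (b * (t - t1)))

/-- `ψ` split at `-t1` and `t1` rather than written through `|t|`, so that `hasDerivAt_ite_le`
applies. -/
def state (t : ℝ) : ℝ :=
  if t ≤ t1 then (if t ≤ -t1 then outer a b t1 (-t) else cos (a * t)) else outer a b t1 t

def stateDeriv (t : ℝ) : ℝ :=
  if t ≤ t1 then (if t ≤ -t1 then -outerDeriv a b t1 (-t) else -(a * sin (a * t)))
  else outerDeriv a b t1 t

variable {a b t1}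

theorem hasDerivAt_outer (t : ℝ) : HasDerivAt (outer a b t1) (outerDeriv a b t1 t) t := by
  have h : HasDerivAt (fun s => b * (s - t1)) b t := by
    simpa using ((hasDerivAt_id t).sub_const t1).const_mul b
  exact ((h.cosh.const_mul _).sub (h.sinh.const_mul _)).congr_deriv
    (by simp only [outerDeriv]; ring)

theorem hasDerivAt_outerDeriv (t : ℝ) :
    HasDerivAt (outerDeriv a b t1) (b ^ 2 * outer a b t1 t) t := by
  have h : HasDerivAt (fun s => b * (s - t1)) b t := by
    simpa using ((hasDerivAt_id t).sub_const t1).const_mul b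
  exact (((h.sinh.const_mul _).sub (h.cosh.const_mul _)).const_mul b).congr_deriv
    (by simp only [outer]; ring)

theorem outer_self : outer a b t1 t1 = cos (a * t1) := by simp [outer]

theorem outerDeriv_self (hb : b ≠ 0) : outerDeriv a b t1 t1 = -(a * sin (a * t1)) := by
  simp only [outerDeriv, sub_self, mul_zero, sinh_zero, cosh_zero, mul_one, zero_sub]
  field_simp

theorem outerDeriv_add_artanh_div_eq_zero (hb : b ≠ 0) (hcos : cos (a * t1) ≠ 0)
    (hk : a / b * tan (a * t1) ∈ Ioo (-1) 1) :
    outerDeriv a b t1 (t1 + artanh (a / b * tan (a * t1)) / b) = 0 := by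
  have hL : b * (t1 + artanh (a / b * tan (a * t1)) / b - t1) = artanh (a / b * tan (a * t1)) :=
    by field_simp; ring
  rw [outerDeriv, hL, sinh_artanh_eq_mul_cosh hk, ← tan_mul_cos hcos]
  ring

theorem hasDerivAt_state (hb : b ≠ 0) (ht1 : 0 < t1) (t : ℝ) :
    HasDerivAt (state a b t1) (stateDeriv a b t1 t) t := by
  have hinner : ∀ t, HasDerivAt (fun s => if s ≤ -t1 then outer a b t1 (-s) else cos (a * s))
      (if t ≤ -t1 then -outerDeriv a b t1 (-t) else -(a * sin (a * t))) t := by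
    refine hasDerivAt_ite_le_s14 (fun t => ?_) (fun t => ?_) ?_ ?_
    · simpa [Function.comp_def] using (hasDerivAt_outer (-t)).comp t (hasDerivAt_neg t)
    · simpa [mul_comm] using ((hasDerivAt_id t).const_mul a).cos
    · simp [outer_self]
    · simp [outerDeriv_self hb]
  have hnt1 : ¬ t1 ≤ -t1 := by linarith
  exact hasDerivAt_ite_le_s14 hinner hasDerivAt_outer (by simp [hnt1, outer_self])
    (by simp [hnt1, outerDeriv_self hb]) t

theorem continuous_stateDeriv (hb : b ≠ 0) (ht1 : 0 < t1) : Continuous (stateDeriv a b t1) := by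
  have hcont : Continuous (outerDeriv a b t1) := by unfold outerDeriv; fun_prop
  have hnt1 : ¬ t1 ≤ -t1 := by linarith
  refine .if_le (.if_le (by fun_prop) (by fun_prop) continuous_id continuous_const ?_) hcont
    continuous_id continuous_const ?_
  · rintro _ rfl
    simp [outerDeriv_self hb]
  · rintro _ rfl
    simp [hnt1, outerDeriv_self hb]

theorem deriv_state (hb : b ≠ 0) (ht1 : 0 < t1) : deriv (state a b t1) = stateDeriv a b t1 :=
  funext fun t => (hasDerivAt_state hb ht1 t).deriv

theorem contDiff_one_state (hb : b ≠ 0) (ht1 : 0 < t1) : ContDiff ℝ 1 (state a b t1) :=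
  contDiff_one_iff_deriv.mpr ⟨fun t => (hasDerivAt_state hb ht1 t).differentiableAt,
    deriv_state hb ht1 ▸ continuous_stateDeriv hb ht1⟩

theorem hasDerivAt_stateDeriv (ht1 : 0 < t1) {t : ℝ} (ht : |t| ≠ t1) :
    HasDerivAt (stateDeriv a b t1) ((if |t| ≤ t1 then -a ^ 2 else b ^ 2) * state a b t1 t) t := by
  have hcos : HasDerivAt (fun s => -(a * sin (a * s))) (-a ^ 2 * cos (a * t)) t :=
    (((hasDerivAt_id t).const_mul a).sin.const_mul a).neg.congr_deriv (by simp; ring)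
  have hout : HasDerivAt (fun s => -outerDeriv a b t1 (-s)) (b ^ 2 * outer a b t1 (-t)) t :=
    ((hasDerivAt_outerDeriv (-t)).comp t (hasDerivAt_neg t)).neg.congr_deriv (by ring)
  rcases lt_or_gt_of_ne ht with h | h
  · obtain ⟨hl, hr⟩ := abs_lt.mp h
    exact ((hcos.ite_le_of_gt hl).ite_le_of_lt hr).congr_deriv
      (by simp [h.le, state, hr.le, not_le.mpr hl])
  · have hnot : ¬ |t| ≤ t1 := not_le.mpr h
    rcases lt_abs.mp h with h' | h'
    · exact ((hasDerivAt_outerDeriv t).ite_le_of_gt h').congr_deriv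
        (by simp [hnot, state, show ¬ t ≤ t1 by linarith])
    · exact ((hout.ite_le_of_lt (show t < -t1 by linarith)).ite_le_of_lt
        (show t < t1 by linarith)).congr_deriv
        (by simp [hnot, state, show t ≤ -t1 by linarith, show t ≤ t1 by linarith])

theorem state_eq_ite_abs (ht1 : 0 < t1) (t : ℝ) :
    state a b t1 t = if |t| ≤ t1 then cos (a * t) else outer a b t1 |t| := by
  rcases le_or_gt 0 t with h | h
  · rw [abs_of_nonneg h]
    simp [state, show ¬ t ≤ -t1 by linarith]
  · rw [abs_of_neg h]
    rcases lt_trichotomy t (-t1) with h' | rfl | h'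
    · simp [state, h.le.trans ht1.le, h'.le, show ¬ -t ≤ t1 by linarith]
    · simp [state, outer_self, ht1.le]
    · simp [state, h.le.trans ht1.le, not_le.mpr h', show -t ≤ t1 by linarith]

end FiniteWell

open FiniteWell

/-- The explicit ground state `ψ` of the Schrödinger operator `−d²/dt² + V` with finite
potential well `V` of height `M = u_max − u_min` and half-width `t1`, on `[−T/2, T/2]`:
`ψ` is `C¹`, twice differentiable away from `|t| = t1`, satisfies periodic boundary
conditions, and is a nontrivial eigenfunction with eigenvalue `u_max`. -/
theorem schrodinger_ground_state (umin umax : ℝ) (humin : umin < 0) (humax : 0 < umax)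
    (t1 : ℝ) (ht1 : t1 ∈ Ioo 0 (OCt1star umin umax)) (T : ℝ) (hT : T = OCT umin umax t1)
    (M : ℝ) (hM : M = umax - umin) (ψ V : ℝ → ℝ)
    (hψ : ∀ t : ℝ, ψ t =
      if |t| ≤ t1 then Real.cos (Real.sqrt umax * t)
      else Real.cos (Real.sqrt umax * t1) * Real.cosh (Real.sqrt (-umin) * (|t| - t1))
        - (Real.sqrt umax / Real.sqrt (-umin)) * Real.sin (Real.sqrt umax * t1) *
          Real.sinh (Real.sqrt (-umin) * (|t| - t1)))
    (hV : ∀ t : ℝ, V t = if |t| ≤ t1 then 0 else M) :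
    ContDiffOn ℝ 1 ψ (Icc (-(T / 2)) (T / 2)) ∧
    (∀ t ∈ Ioo (-(T / 2)) (T / 2), |t| ≠ t1 → DifferentiableAt ℝ (deriv ψ) t) ∧
    ψ (-(T / 2)) = ψ (T / 2) ∧
    deriv ψ (-(T / 2)) = 0 ∧ deriv ψ (T / 2) = 0 ∧
    (∀ t ∈ Ioo (-(T / 2)) (T / 2), |t| ≠ t1 →
      -deriv (deriv ψ) t + V t * ψ t = umax * ψ t) ∧
    (∃ t ∈ Icc (-(T / 2)) (T / 2), ψ t ≠ 0) := by
  obtain ⟨ht1pos, ht1lt⟩ := ht1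
  rw [OCt1star] at ht1lt
  rw [OCT] at hT
  set a := √umax
  set b := √(-umin)
  have ha : 0 < a := sqrt_pos.mpr humax
  have hb : 0 < b := sqrt_pos.mpr (neg_pos.mpr humin)
  have hθ : a * t1 ∈ Ioo 0 (arctan (b / a)) :=
    ⟨mul_pos ha ht1pos, by rwa [one_div_mul_eq_div, lt_div_iff₀' ha] at ht1lt⟩
  have hcos : 0 < cos (a * t1) :=
    cos_pos_of_mem_Ioo ⟨by linarith [pi_pos, hθ.1], hθ.2.trans (arctan_lt_pi_div_two _)⟩
  have hk := div_mul_tan_mem_Ioo ha hb hθ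
  have hT2 : T / 2 = t1 + artanh (a / b * tan (a * t1)) / b := by
    rw [hT, artanh_eq_half_log ⟨by linarith [hk.1], hk.2.le⟩]
    ring
  have ht1T : t1 < T / 2 := by
    linarith [div_pos (artanh_pos hk) hb]
  have hψ_eq : ψ = state a b t1 := funext fun t => (hψ t).trans (state_eq_ite_abs ht1pos t).symm
  have hderiv : deriv ψ = stateDeriv a b t1 := hψ_eq ▸ deriv_state hb.ne' ht1pos
  have hend : outerDeriv a b t1 (T / 2) = 0 := hT2 ▸
    outerDeriv_add_artanh_div_eq_zero hb.ne' hcos.ne' ⟨by linarith [hk.1], hk.2⟩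
  refine ⟨hψ_eq ▸ (contDiff_one_state hb.ne' ht1pos).contDiffOn,
    fun t _ ht => hderiv ▸ (hasDerivAt_stateDeriv ht1pos ht).differentiableAt,
    by simp only [hψ, abs_neg, mul_neg, cos_neg], ?_, ?_, fun t _ ht => ?_,
    0, ⟨by linarith, by linarith⟩, by simp [hψ, ht1pos.le]⟩
  · simp [hderiv, stateDeriv, hend, show -(T / 2) ≤ t1 by linarith,
      show -(T / 2) ≤ -t1 by linarith]
  · simp [hderiv, stateDeriv, hend, not_le.mpr ht1T]
  · rw [hderiv, (hasDerivAt_stateDeriv ht1pos ht).deriv, hV, hM, ← hψ_eq]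
    split_ifs
    · rw [sq_sqrt humax.le]; ring
    · rw [sq_sqrt (neg_pos.mpr humin).le]; ring

end
end

section
/- As t1 → t1*⁻ the following limits hold: (i) T(t1) → +∞; (ii) C(t1)/T(t1) → u_min (turnpike behavior of the optimal cost); (iii) cos(ω_max·t1) → ω_max/√(ω_min² + ω_max²) and ω_max·sin(ω_max·t1) → ω_min·ω_max/√(ω_min² + ω_max²); (iv) c(t1) → 0, where c(t1) = cos²(ω_max·t1)·(1 − (ω_max²/ω_min²)·tan²(ω_max·t1)). -/
/-! With `θ = arctan (ω_min / ω_max) = ω_max t1*`, the ratio `r = (ω_max / ω_min) tan (ω_max t1)`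
increases to `tan θ · ω_max / ω_min = 1` as `t1 → t1*⁻`, so `log ((1 + r) / (1 - r))`, and with it
`T`, tends to `+∞`. Since `C = u_min T + 2 t1 (u_max - u_min)`, this gives `C / T → u_min`. The
remaining quantities are continuous functions of `ω_max t1` at `θ`, where
`cos θ = ω_max / √(ω_min² + ω_max²)`, `sin θ = ω_min / √(ω_min² + ω_max²)`, and
`tan θ = ω_min / ω_max` makes the factor `1 - (ω_max² / ω_min²) tan² θ` of `c` vanish. -/

open MeasureTheory Real Set Filter Topology

noncomputable section

lemma tendsto_const_mul_nhdsLT {c : ℝ} (hc : 0 < c) (x : ℝ) :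
    Tendsto (c * ·) (𝓝[<] x) (𝓝[<] (c * x)) :=
  (continuous_const_mul c).continuousWithinAt.tendsto_nhdsWithin
    fun _ hy => mul_lt_mul_of_pos_left hy hc

lemma tendsto_tan_nhdsLT_arctan (x : ℝ) : Tendsto tan (𝓝[<] (arctan x)) (𝓝[<] x) := by
  have hmem : arctan x ∈ Ioo (-(π / 2)) (π / 2) :=
    ⟨neg_pi_div_two_lt_arctan x, arctan_lt_pi_div_two x⟩
  have hmaps : MapsTo tan (Ioo (-(π / 2)) (arctan x)) (Iio (tan (arctan x))) :=
    fun y hy => strictMonoOn_tan ⟨hy.1, hy.2.trans hmem.2⟩ hmem hy.2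
  rw [← nhdsWithin_Ioo_eq_nhdsLT hmem.1]
  simpa only [tan_arctan] using
    (continuousAt_tan.mpr (cos_arctan_pos x).ne').continuousWithinAt.tendsto_nhdsWithin hmaps

lemma tendsto_log_one_add_div_one_sub_atTop :
    Tendsto (fun r => log ((1 + r) / (1 - r))) (𝓝[<] 1) atTop := by
  have hnum : Tendsto (fun r : ℝ => 1 + r) (𝓝[<] 1) (𝓝 2) := by
    simpa [one_add_one_eq_two] using
      ((continuous_const_add (1 : ℝ)).tendsto 1).mono_left nhdsWithin_le_nhds
  have hden : Tendsto (fun r : ℝ => 1 - r) (𝓝[<] 1) (𝓝[>] 0) := by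
    have hmaps : MapsTo (fun r : ℝ => 1 - r) (Iio 1) (Ioi (1 - 1)) :=
      fun _ hr => sub_lt_sub_left hr (1 : ℝ)
    simpa only [sub_self] using
      ((continuous_sub_left (1 : ℝ)).continuousWithinAt (x := 1)).tendsto_nhdsWithin hmaps
  refine tendsto_log_atTop.comp ?_
  simpa only [div_eq_mul_inv, Function.comp_def] using
    hnum.pos_mul_atTop two_pos (tendsto_inv_nhdsGT_zero.comp hden)

lemma cos_arctan_div {b : ℝ} (hb : 0 < b) (a : ℝ) :
    cos (arctan (a / b)) = b / √(a ^ 2 + b ^ 2) := by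
  rw [cos_arctan, div_pow, one_add_div (by positivity), sqrt_div' _ (by positivity),
    sqrt_sq hb.le, add_comm, one_div_div]

lemma sin_arctan_div {b : ℝ} (hb : 0 < b) (a : ℝ) :
    sin (arctan (a / b)) = a / √(a ^ 2 + b ^ 2) := by
  rw [sin_arctan, div_pow, one_add_div (by positivity), sqrt_div' _ (by positivity),
    sqrt_sq hb.le, add_comm, div_div_div_cancel_right₀ hb.ne']

section

variable {umin umax : ℝ}

lemma sqrt_mul_OCt1star (humax : 0 < umax) :
    √umax * OCt1star umin umax = arctan (√(-umin) / √umax) := by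
  rw [OCt1star, ← mul_assoc, mul_one_div_cancel (sqrt_pos.mpr humax).ne', one_mul]

lemma tendsto_comp_sqrt_mul_nhdsLT_OCt1star (humax : 0 < umax) {f : ℝ → ℝ}
    (hf : ContinuousAt f (arctan (√(-umin) / √umax))) :
    Tendsto (fun t => f (√umax * t)) (𝓝[<] (OCt1star umin umax))
      (𝓝 (f (arctan (√(-umin) / √umax)))) := by
  rw [← sqrt_mul_OCt1star humax] at hf ⊢
  exact (hf.comp (continuous_const_mul _).continuousAt).tendsto.mono_left nhdsWithin_le_nhds

lemma tendsto_div_mul_tan_nhdsLT_one (humin : umin < 0) (humax : 0 < umax) :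
    Tendsto (fun t => √umax / √(-umin) * tan (√umax * t)) (𝓝[<] (OCt1star umin umax))
      (𝓝[<] 1) := by
  have ha : 0 < √(-umin) := sqrt_pos.mpr (neg_pos.mpr humin)
  have hb : 0 < √umax := sqrt_pos.mpr humax
  have h := (tendsto_const_mul_nhdsLT (div_pos hb ha) _).comp <|
    (tendsto_tan_nhdsLT_arctan _).comp <|
      sqrt_mul_OCt1star (umin := umin) humax ▸ tendsto_const_mul_nhdsLT hb (OCt1star umin umax)
  rwa [div_mul_div_comm, mul_comm (√umax), div_self (mul_pos ha hb).ne'] at h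

theorem tendsto_OCT_atTop (humin : umin < 0) (humax : 0 < umax) :
    Tendsto (OCT umin umax) (𝓝[<] (OCt1star umin umax)) atTop :=
  ((tendsto_log_one_add_div_one_sub_atTop.comp
    (tendsto_div_mul_tan_nhdsLT_one humin humax)).const_mul_atTop
      (one_div_pos.mpr (sqrt_pos.mpr (neg_pos.mpr humin)))).atTop_add
    ((continuous_const_mul 2).tendsto _ |>.mono_left nhdsWithin_le_nhds)

theorem tendsto_OCC_div_OCT (humin : umin < 0) (humax : 0 < umax) :
    Tendsto (fun t => OCC umin umax t / OCT umin umax t) (𝓝[<] (OCt1star umin umax))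
      (𝓝 umin) := by
  have hT := tendsto_OCT_atTop humin humax
  have h : Tendsto (fun t => umin + 2 * t * (umax - umin) / OCT umin umax t)
      (𝓝[<] (OCt1star umin umax)) (𝓝 (umin + 0)) :=
    tendsto_const_nhds.add <| Tendsto.div_atTop
      ((continuous_id.const_mul 2 |>.mul continuous_const).tendsto _ |>.mono_left
        nhdsWithin_le_nhds) hT
  rw [add_zero] at h
  refine h.congr' ?_
  filter_upwards [hT.eventually_gt_atTop 0] with t ht
  rw [OCC]
  field_simp
  ring

end

/-- Limits as `t1 → t1*⁻`: `T(t1) → +∞`, `C(t1)/T(t1) → u_min` (turnpike behavior),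
`cos(ω_max·t1) → ω_max/√(ω_min² + ω_max²)`,
`ω_max·sin(ω_max·t1) → ω_min·ω_max/√(ω_min² + ω_max²)`, and `c(t1) → 0`. -/
theorem limits_at_t1star (umin umax : ℝ) (humin : umin < 0) (humax : 0 < umax) :
    Tendsto (OCT umin umax)
      (nhdsWithin (OCt1star umin umax) (Iio (OCt1star umin umax))) atTop ∧
    Tendsto (fun t1 => OCC umin umax t1 / OCT umin umax t1)
      (nhdsWithin (OCt1star umin umax) (Iio (OCt1star umin umax))) (nhds umin) ∧
    Tendsto (fun t1 => Real.cos (Real.sqrt umax * t1))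
      (nhdsWithin (OCt1star umin umax) (Iio (OCt1star umin umax)))
      (nhds (Real.sqrt umax / Real.sqrt (Real.sqrt (-umin) ^ 2 + Real.sqrt umax ^ 2))) ∧
    Tendsto (fun t1 => Real.sqrt umax * Real.sin (Real.sqrt umax * t1))
      (nhdsWithin (OCt1star umin umax) (Iio (OCt1star umin umax)))
      (nhds (Real.sqrt (-umin) * Real.sqrt umax /
        Real.sqrt (Real.sqrt (-umin) ^ 2 + Real.sqrt umax ^ 2))) ∧
    Tendsto (fun t1 => Real.cos (Real.sqrt umax * t1) ^ 2 *
        (1 - (Real.sqrt umax ^ 2 / Real.sqrt (-umin) ^ 2) *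
          Real.tan (Real.sqrt umax * t1) ^ 2))
      (nhdsWithin (OCt1star umin umax) (Iio (OCt1star umin umax))) (nhds 0) := by
  have ha : 0 < √(-umin) := sqrt_pos.mpr (neg_pos.mpr humin)
  have hb : 0 < √umax := sqrt_pos.mpr humax
  have htan : ContinuousAt tan (arctan (√(-umin) / √umax)) :=
    continuousAt_tan.mpr (cos_arctan_pos _).ne'
  refine ⟨tendsto_OCT_atTop humin humax, tendsto_OCC_div_OCT humin humax, ?_, ?_, ?_⟩
  · simpa only [cos_arctan_div hb] using
      tendsto_comp_sqrt_mul_nhdsLT_OCt1star humax continuous_cos.continuousAt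
  · convert tendsto_comp_sqrt_mul_nhdsLT_OCt1star humax
      (continuous_sin.const_mul √umax).continuousAt using 2
    rw [sin_arctan_div hb]
    ring
  · have hc : ContinuousAt (fun s => cos s ^ 2 * (1 - √umax ^ 2 / √(-umin) ^ 2 * tan s ^ 2))
        (arctan (√(-umin) / √umax)) := by
      fun_prop
    convert tendsto_comp_sqrt_mul_nhdsLT_OCt1star humax hc using 2
    rw [tan_arctan]
    field_simp
    ring

end
end

section
/- Let t1 ∈ (0, t1*) and T = T(t1). Then the explicit trajectory is symmetric with respect to the x-axis: x*(T − t) = x*(t) for every t ∈ [0, T], and hence y*(T − t) = −y*(t) for every t ∈ [0, T]; in particular y*(T/2) = 0. -/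
open MeasureTheory Real Set Filter Topology

noncomputable section

/-! With `ω₁ = √u_max`, `ω₂ = √(-u_min)`, `L = T - 2 t1`, the last arc of `x*` is by definition the
mirror image of the first, and the middle arc `A cosh (ω₂ a) - B sinh (ω₂ a)`, `a ∈ [0, L]`, is
symmetric about `a = L / 2` as soon as `A (e^{ω₂ L} - 1) = B (e^{ω₂ L} + 1)`. Since
`B / A = (ω₁ / ω₂) tan (ω₁ t1) =: r`, this condition reads `e^{ω₂ L} = (1 + r) / (1 - r)`, which is
the definition of `T(t1)`; `t1 < t1*` is what makes `0 < r < 1`. Hence `x* (T - t) = x* t` for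
every real `t`, and differentiating this identity gives the claims on `y*` whether or not `x*` is
differentiable (where it is not, both sides are the junk value `0`). -/

section ReflectionSymmetry

variable {𝕜 F : Type*} [NontriviallyNormedField 𝕜] [NormedAddCommGroup F] [NormedSpace 𝕜 F]

theorem deriv_const_sub_eq_neg_of_symm {f : 𝕜 → F} {T : 𝕜} (h : ∀ t, f (T - t) = f t) (t : 𝕜) :
    deriv f (T - t) = -deriv f t := by
  have hf : (fun t ↦ f (T - t)) = f := funext h
  rw [← hf, deriv_comp_const_sub, sub_sub_cancel, hf]

theorem deriv_half_eq_zero_of_symm [CharZero 𝕜] {f : 𝕜 → 𝕜} {T : 𝕜} (h : ∀ t, f (T - t) = f t) :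
    deriv f (T / 2) = 0 := by
  have := deriv_const_sub_eq_neg_of_symm h (T / 2)
  rwa [sub_half, CharZero.eq_neg_self_iff] at this

end ReflectionSymmetry

theorem cosh_sub_sinh_symm {A B ω L : ℝ}
    (hK : A * (exp (ω * L) - 1) = B * (exp (ω * L) + 1)) (a : ℝ) :
    A * cosh (ω * (L - a)) - B * sinh (ω * (L - a)) = A * cosh (ω * a) - B * sinh (ω * a) := by
  simp only [cosh_eq, sinh_eq, mul_sub, sub_eq_add_neg (ω * L), neg_neg, exp_add, exp_neg, neg_add]
  field_simp
  linear_combination (exp (ω * L) - exp (ω * a) ^ 2) * hK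

section PiecewiseTrajectory

variable {umin umax t1 T s : ℝ}

theorem OCxstar_of_le (hs : s ≤ t1) : OCxstar umin umax t1 T s = cos (√umax * s) := by
  rw [OCxstar, if_pos hs]

theorem OCxstar_of_mem_Icc (hs : s ∈ Icc t1 (T - t1)) :
    OCxstar umin umax t1 T s = cos (√umax * t1) * cosh (√(-umin) * (s - t1))
      - √umax / √(-umin) * sin (√umax * t1) * sinh (√(-umin) * (s - t1)) := by
  rcases hs.1.eq_or_lt with rfl | hlt
  · simp [OCxstar_of_le le_rfl]
  · rw [OCxstar, if_neg hlt.not_ge, if_pos hs.2]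

theorem OCxstar_of_ge (hlt : t1 < T - t1)
    (hK : cos (√umax * t1) * (exp (√(-umin) * (T - 2 * t1)) - 1)
      = √umax / √(-umin) * sin (√umax * t1) * (exp (√(-umin) * (T - 2 * t1)) + 1))
    (hs : T - t1 ≤ s) : OCxstar umin umax t1 T s = cos (√umax * (T - s)) := by
  rcases hs.eq_or_lt with rfl | hgt
  · -- the middle arc, being symmetric about its midpoint, ends at the value it starts with
    have hend := cosh_sub_sinh_symm hK 0
    simp only [mul_zero, cosh_zero, sinh_zero, mul_one, sub_zero] at hend
    rw [OCxstar_of_mem_Icc ⟨hlt.le, le_rfl⟩, sub_sub_cancel, sub_sub, ← two_mul, hend]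
  · rw [OCxstar, if_neg (by linarith), if_neg hgt.not_ge]

theorem OCxstar_const_sub (hlt : t1 < T - t1)
    (hK : cos (√umax * t1) * (exp (√(-umin) * (T - 2 * t1)) - 1)
      = √umax / √(-umin) * sin (√umax * t1) * (exp (√(-umin) * (T - 2 * t1)) + 1)) (t : ℝ) :
    OCxstar umin umax t1 T (T - t) = OCxstar umin umax t1 T t := by
  rcases le_total t t1 with ht | ht
  · rw [OCxstar_of_le ht, OCxstar_of_ge hlt hK (by linarith), sub_sub_cancel]
  rcases le_total t (T - t1) with ht' | ht'
  · rw [OCxstar_of_mem_Icc ⟨ht, ht'⟩, OCxstar_of_mem_Icc ⟨by linarith, by linarith⟩,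
      show T - t - t1 = T - 2 * t1 - (t - t1) by ring]
    exact cosh_sub_sinh_symm hK (t - t1)
  · rw [OCxstar_of_ge hlt hK ht', OCxstar_of_le (by linarith)]

end PiecewiseTrajectory

theorem tan_ratio_mem_Ioo_of_lt_arctan {ω₁ ω₂ t1 : ℝ} (hω₁ : 0 < ω₁) (hω₂ : 0 < ω₂)
    (ht1 : t1 ∈ Ioo 0 (1 / ω₁ * arctan (ω₂ / ω₁))) :
    0 < cos (ω₁ * t1) ∧ ω₁ / ω₂ * tan (ω₁ * t1) ∈ Ioo 0 1 := by
  have hpos : 0 < ω₁ * t1 := mul_pos hω₁ ht1.1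
  have hlt : ω₁ * t1 < arctan (ω₂ / ω₁) := by
    have := mul_lt_mul_of_pos_left ht1.2 hω₁
    rwa [← mul_assoc, mul_one_div_cancel hω₁.ne', one_mul] at this
  have hlt' : ω₁ * t1 < π / 2 := hlt.trans (arctan_lt_pi_div_two _)
  have htan : tan (ω₁ * t1) < ω₂ / ω₁ := by
    simpa only [tan_arctan] using
      tan_lt_tan_of_nonneg_of_lt_pi_div_two hpos.le (arctan_lt_pi_div_two _) hlt
  refine ⟨cos_pos_of_mem_Ioo ⟨by linarith [pi_pos], hlt'⟩,
    mul_pos (div_pos hω₁ hω₂) (tan_pos_of_pos_of_lt_pi_div_two hpos hlt'), ?_⟩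
  calc ω₁ / ω₂ * tan (ω₁ * t1) < ω₁ / ω₂ * (ω₂ / ω₁) := by gcongr
    _ = 1 := by field_simp

theorem OCT_spec {umin umax t1 : ℝ} (humin : umin < 0) (humax : 0 < umax)
    (ht1 : t1 ∈ Ioo 0 (OCt1star umin umax)) :
    2 * t1 < OCT umin umax t1 ∧
      cos (√umax * t1) * (exp (√(-umin) * (OCT umin umax t1 - 2 * t1)) - 1)
        = √umax / √(-umin) * sin (√umax * t1) *
          (exp (√(-umin) * (OCT umin umax t1 - 2 * t1)) + 1) := by
  have hω₂ : 0 < √(-umin) := sqrt_pos.mpr (neg_pos.mpr humin)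
  obtain ⟨hcos, hr0, hr1⟩ :=
    tan_ratio_mem_Ioo_of_lt_arctan (sqrt_pos.mpr humax) hω₂ ht1
  set r := √umax / √(-umin) * tan (√umax * t1) with hr
  have hE : exp (√(-umin) * (OCT umin umax t1 - 2 * t1)) = (1 + r) / (1 - r) := by
    rw [OCT, add_sub_cancel_right, ← mul_assoc, mul_one_div_cancel hω₂.ne', one_mul,
      exp_log (div_pos (by linarith) (by linarith))]
  have hE1 : 1 < exp (√(-umin) * (OCT umin umax t1 - 2 * t1)) := by
    rw [hE, one_lt_div (by linarith)]
    linarith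
  refine ⟨?_, ?_⟩
  · linarith [pos_of_mul_pos_right (one_lt_exp_iff.mp hE1) hω₂.le]
  · have hsin : √umax / √(-umin) * sin (√umax * t1) = r * cos (√umax * t1) := by
      rw [hr, tan_eq_sin_div_cos]
      field_simp
    have hr1' : 1 - r ≠ 0 := by linarith
    rw [hE, hsin]
    field_simp
    ring

/-- Symmetry of the explicit trajectory with respect to the `x`-axis:
`x*(T − t) = x*(t)` and `y*(T − t) = −y*(t)` on `[0, T]`, with `y* = (x*)'`;
in particular `y*(T/2) = 0`. -/
theorem explicit_trajectory_symmetric (umin umax : ℝ)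
    (humin : umin < 0) (humax : 0 < umax)
    (t1 : ℝ) (ht1 : t1 ∈ Ioo 0 (OCt1star umin umax)) (T : ℝ) (hT : T = OCT umin umax t1) :
    (∀ t ∈ Icc (0:ℝ) T, OCxstar umin umax t1 T (T - t) = OCxstar umin umax t1 T t) ∧
    (∀ t ∈ Icc (0:ℝ) T,
      deriv (OCxstar umin umax t1 T) (T - t) = -deriv (OCxstar umin umax t1 T) t) ∧
    deriv (OCxstar umin umax t1 T) (T / 2) = 0 := by
  obtain ⟨hlt, hK⟩ := OCT_spec humin humax ht1
  rw [← hT] at hlt hK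
  have hsymm := OCxstar_const_sub (T := T) (by linarith) hK
  exact ⟨fun t _ ↦ hsymm t, fun t _ ↦ deriv_const_sub_eq_neg_of_symm hsymm t,
    deriv_half_eq_zero_of_symm hsymm⟩
end
end

section
/- As t1 → t1*⁻ one has √(c(t1))·exp(ω_min·T(t1)/2) → (2·ω_max/√(ω_min² + ω_max²))·exp((ω_min/ω_max)·Arctan(ω_min/ω_max)), where c(t1) = cos²(ω_max·t1)·(1 − (ω_max²/ω_min²)·tan²(ω_max·t1)); i.e., the minimal value x*(T/2) = √(c(t1)) of the optimal trajectory is asymptotically equivalent to (2·ω_max/√(ω_min² + ω_max²))·exp((ω_min/ω_max)·Arctan(ω_min/ω_max) − ω_min·T(t1)/2) as T(t1) → +∞. -/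
open MeasureTheory Real Set Filter Topology

noncomputable section

lemma exp_half_log {x : ℝ} (hx : 0 < x) : Real.exp (Real.log x / 2) = Real.sqrt x := by
  rw [← Real.log_sqrt hx.le, Real.exp_log (Real.sqrt_pos.2 hx)]

set_option maxHeartbeats 1000000 in
/-- Asymptotics of the minimal value of the optimal trajectory: as `t1 → t1*⁻`,
`√(c(t1))·exp(ω_min·T(t1)/2)` tends to
`(2·ω_max/√(ω_min² + ω_max²))·exp((ω_min/ω_max)·Arctan(ω_min/ω_max))`. -/
theorem min_value_asymptotics (umin umax : ℝ) (humin : umin < 0) (humax : 0 < umax) :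
    Tendsto (fun t1 =>
        Real.sqrt (Real.cos (Real.sqrt umax * t1) ^ 2 *
            (1 - (Real.sqrt umax ^ 2 / Real.sqrt (-umin) ^ 2) *
              Real.tan (Real.sqrt umax * t1) ^ 2)) *
          Real.exp (Real.sqrt (-umin) * OCT umin umax t1 / 2))
      (nhdsWithin (OCt1star umin umax) (Iio (OCt1star umin umax)))
      (nhds ((2 * Real.sqrt umax /
          Real.sqrt (Real.sqrt (-umin) ^ 2 + Real.sqrt umax ^ 2)) *
        Real.exp ((Real.sqrt (-umin) / Real.sqrt umax) *
          Real.arctan (Real.sqrt (-umin) / Real.sqrt umax)))) := by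
  set a := Real.sqrt (-umin) with ha
  set b := Real.sqrt umax with hb
  have ha0 : 0 < a := Real.sqrt_pos.2 (by linarith)
  have hb0 : 0 < b := Real.sqrt_pos.2 humax
  set t1s := OCt1star umin umax with ht1s
  have ht1sdef : t1s = (1 / b) * Real.arctan (a / b) := rfl
  have harctan_pos : 0 < Real.arctan (a / b) := by
    have := Real.arctan_strictMono (show (0:ℝ) < a / b by positivity)
    rwa [Real.arctan_zero] at this
  have ht1pos : 0 < t1s := by rw [ht1sdef]; positivity
  have hbt1s : b * t1s = Real.arctan (a / b) := by
    rw [ht1sdef]; field_simp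
  -- the continuous substitute function
  set g : ℝ → ℝ := fun t1 =>
    (Real.cos (b * t1) + b / a * Real.sin (b * t1)) * Real.exp (a * t1) with hg
  have hgcont : Continuous g := by continuity
  have hgt : Tendsto g (nhdsWithin t1s (Iio t1s)) (nhds (g t1s)) :=
    (hgcont.tendsto t1s).mono_left nhdsWithin_le_nhds
  have hgval : g t1s =
      (2 * b / Real.sqrt (a ^ 2 + b ^ 2)) *
        Real.exp ((a / b) * Real.arctan (a / b)) := by
    have h1 : a * t1s = (a / b) * Real.arctan (a / b) := by
      rw [ht1sdef]; ring
    rw [hg]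
    simp only [hbt1s, h1, Real.cos_arctan, Real.sin_arctan]
    have hs : Real.sqrt (1 + (a / b) ^ 2) = Real.sqrt (a ^ 2 + b ^ 2) / b := by
      have : 1 + (a / b) ^ 2 = (a ^ 2 + b ^ 2) / b ^ 2 := by field_simp; ring
      rw [this, Real.sqrt_div (by positivity), Real.sqrt_sq hb0.le]
    have hsq : 0 < Real.sqrt (a ^ 2 + b ^ 2) := by positivity
    rw [hs]
    field_simp
    ring
  refine Tendsto.congr' ?_ (hgval ▸ hgt)
  have hmem : Ioo 0 t1s ∈ nhdsWithin t1s (Iio t1s) :=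
    Ioo_mem_nhdsLT_of_mem ⟨ht1pos, le_refl _⟩
  filter_upwards [hmem] with t1 ht1
  obtain ⟨ht1a, ht1b⟩ := ht1
  symm
  set θ := b * t1 with hθ
  have hθ0 : 0 < θ := by positivity
  have hθlt : θ < Real.arctan (a / b) := by
    rw [← hbt1s]; exact (mul_lt_mul_iff_right₀ hb0).2 ht1b
  have hθpi : θ < Real.pi / 2 := hθlt.trans (Real.arctan_lt_pi_div_two _)
  have hcos : 0 < Real.cos θ :=
    Real.cos_pos_of_mem_Ioo ⟨by linarith [Real.pi_div_two_pos], hθpi⟩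
  have htan0 : 0 < Real.tan θ := Real.tan_pos_of_pos_of_lt_pi_div_two hθ0 hθpi
  have htanlt : Real.tan θ < a / b := by
    have := Real.tan_lt_tan_of_nonneg_of_lt_pi_div_two hθ0.le
      (Real.arctan_lt_pi_div_two _) hθlt
    rwa [Real.tan_arctan] at this
  set s := Real.tan θ with hsdef
  set r := b / a with hr
  have hr0 : 0 < r := by positivity
  have hrs1 : r * s < 1 := by
    have h := (mul_lt_mul_iff_right₀ hr0).2 htanlt
    have : r * (a / b) = 1 := by rw [hr]; field_simp
    linarith
  have hrs0 : 0 < r * s := mul_pos hr0 htan0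
  have hA : 0 < (1 + r * s) / (1 - r * s) := by
    apply div_pos <;> linarith
  -- unfold OCT
  have hT : a * OCT umin umax t1 / 2 =
      Real.log ((1 + r * s) / (1 - r * s)) / 2 + a * t1 := by
    rw [OCT, ← ha, ← hb, ← hθ, ← hsdef, ← hr]
    field_simp
  rw [hT, Real.exp_add, exp_half_log hA]
  -- simplify the sqrt of c
  have hc : Real.cos θ ^ 2 * (1 - b ^ 2 / a ^ 2 * s ^ 2) =
      Real.cos θ ^ 2 * ((1 - r * s) * (1 + r * s)) := by
    rw [hr]; field_simp; ring
  rw [hc, Real.sqrt_mul (sq_nonneg _), Real.sqrt_sq hcos.le]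
  have hprod : Real.sqrt ((1 - r * s) * (1 + r * s)) *
      Real.sqrt ((1 + r * s) / (1 - r * s)) = 1 + r * s := by
    have hne : 1 - r * s ≠ 0 := by linarith
    rw [← Real.sqrt_mul (by nlinarith)]
    have heq : (1 - r * s) * (1 + r * s) * ((1 + r * s) / (1 - r * s)) =
        (1 + r * s) ^ 2 := by
      field_simp
    rw [heq, Real.sqrt_sq (by linarith)]
  have hfin : Real.cos θ * (1 + r * s) = Real.cos θ + r * Real.sin θ := by
    rw [hsdef, Real.tan_eq_sin_div_cos]
    field_simp
  calc Real.cos θ * Real.sqrt ((1 - r * s) * (1 + r * s)) *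
        (Real.sqrt ((1 + r * s) / (1 - r * s)) * Real.exp (a * t1))
      = Real.cos θ * (Real.sqrt ((1 - r * s) * (1 + r * s)) *
          Real.sqrt ((1 + r * s) / (1 - r * s))) * Real.exp (a * t1) := by ring
    _ = (Real.cos θ + r * Real.sin θ) * Real.exp (a * t1) := by
        rw [hprod, hfin]
    _ = g t1 := by rw [hg, hr]

end
end
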